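/- arXiv:1301.4579 — 8 statements merged into one kernel-verified Lean document; each statement's English description precedes it below -/
import Mathlib

section
/- Every finite set A of n nonzero integers contains a sum-free subset of size at least n/3; that is, there exists A' ⊆ A with |A'| ≥ n/3 such that there are no x, y, z ∈ A' with x + y = z. -/
open Finset

lemma count_M (p k : ℕ) [hP : Fact p.Prime] (hp : p = 3*k+2) :
    (univ.filter (fun r : ZMod p => r.val ∈ Finset.Icc (k+1) (2*k+1))).card = k+1 := by
  haveI : NeZero p := ⟨by omega⟩
  have h1 : (univ.filter (fun r : ZMod p => r.val ∈ Finset.Icc (k+1) (2*k+1))).card =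
      (Finset.Icc (k+1) (2*k+1)).card := by
    apply Finset.card_bij' (fun r _ => ZMod.val r) (fun n _ => (n : ZMod p))
    · intro r hr
      exact (Finset.mem_filter.mp hr).2
    · intro n hn
      simp only [Finset.mem_filter, Finset.mem_univ, true_and]
      rw [ZMod.val_natCast_of_lt (by simp at hn; omega)]
      exact hn
    · intro r hr
      simp [ZMod.natCast_val, ZMod.cast_id]
    · intro n hn
      exact ZMod.val_natCast_of_lt (by simp at hn; omega)
  rw [h1, Nat.card_Icc]; omega

lemma count_shift (p k : ℕ) [hP : Fact p.Prime] (hp : p = 3*k+2) (a : ZMod p) (ha : a ≠ 0) :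
    ((univ.erase (0:ZMod p)).filter
      (fun t => (t*a).val ∈ Finset.Icc (k+1) (2*k+1))).card = k+1 := by
  haveI : NeZero p := ⟨by omega⟩
  have h1 : ((univ.erase (0:ZMod p)).filter
      (fun t => (t*a).val ∈ Finset.Icc (k+1) (2*k+1))).card =
      (univ.filter (fun r : ZMod p => r.val ∈ Finset.Icc (k+1) (2*k+1))).card := by
    apply Finset.card_bij' (fun t _ => t * a) (fun r _ => r * a⁻¹)
    · intro t ht
      simp only [Finset.mem_filter, Finset.mem_univ, true_and]
      exact (Finset.mem_filter.mp ht).2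
    · intro r hr
      simp only [Finset.mem_filter, Finset.mem_univ, true_and, Finset.mem_Icc] at hr
      have hr0 : r ≠ 0 := by
        intro h; rw [h] at hr; simp [ZMod.val_zero] at hr
      simp only [Finset.mem_filter, Finset.mem_erase, Finset.mem_univ, and_true, true_and,
        Finset.mem_Icc]
      refine ⟨mul_ne_zero hr0 (inv_ne_zero ha), ?_⟩
      rw [mul_assoc, inv_mul_cancel₀ ha, mul_one]; exact hr
    · intro t ht
      rw [mul_assoc, mul_inv_cancel₀ ha, mul_one]
    · intro r hr
      rw [mul_assoc, inv_mul_cancel₀ ha, mul_one]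
  rw [h1]; exact count_M p k hp

/-- Every finite set `A` of `n` nonzero integers contains a sum-free subset of size
at least `n/3`. -/
theorem stmt_0 (A : Finset ℤ) (hA : (0 : ℤ) ∉ A) :
    ∃ A' ⊆ A, (∀ x ∈ A', ∀ y ∈ A', x + y ∉ A') ∧
      (A.card : ℝ) / 3 ≤ (A'.card : ℝ) := by
  classical
  set m : ℕ := A.sup (fun a => a.natAbs) with hm
  obtain ⟨p, hpm, hp, hp2⟩ :=
    Nat.forall_exists_prime_gt_and_eq_mod (a := (2 : ZMod 3)) (by decide) m
  haveI : Fact p.Prime := ⟨hp⟩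
  have hmod : p % 3 = 2 := by
    have := congrArg ZMod.val hp2
    rwa [ZMod.val_natCast, show (2 : ZMod 3).val = 2 from rfl] at this
  set k : ℕ := p / 3 with hk
  have hpk : p = 3*k+2 := by omega
  haveI : NeZero p := ⟨by omega⟩
  have hA0 : ∀ a ∈ A, ((a : ℤ) : ZMod p) ≠ 0 := by
    intro a haA h
    have hdvd : (p:ℤ) ∣ a := (ZMod.intCast_zmod_eq_zero_iff_dvd a p).mp h
    have h1 : p ∣ a.natAbs := by
      have := Int.natAbs_dvd_natAbs.mpr hdvd
      simpa using this
    have ha0 : a.natAbs ≠ 0 := by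
      intro h0
      exact hA (by rwa [Int.natAbs_eq_zero.mp h0] at haA)
    have h2 : p ≤ a.natAbs := Nat.le_of_dvd (Nat.pos_of_ne_zero ha0) h1
    have h3 : a.natAbs ≤ m := Finset.le_sup haA
    omega
  set T : Finset (ZMod p) := univ.erase 0 with hT
  set f : ZMod p → Finset ℤ :=
    fun t => A.filter (fun a => (t * ((a:ℤ) : ZMod p)).val ∈ Finset.Icc (k+1) (2*k+1)) with hf
  have hTcard : T.card = 3*k+1 := by
    rw [hT, Finset.card_erase_of_mem (Finset.mem_univ _), Finset.card_univ, ZMod.card]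
    omega
  have hTne : T.Nonempty := ⟨1, by simp [hT]⟩
  have hsum : ∑ t ∈ T, (f t).card = A.card * (k+1) := by
    simp_rw [hf, Finset.card_filter]
    rw [Finset.sum_comm]
    rw [Finset.sum_congr rfl (fun a haA => ?_), Finset.sum_const, smul_eq_mul]
    rw [← Finset.card_filter]
    exact count_shift p k hpk _ (hA0 a haA)
  have hpig : ∃ t ∈ T, A.card * (k+1) ≤ (3*k+1) * (f t).card := by
    by_contra hcon
    push_neg at hcon
    have hlt : ∑ t ∈ T, (3*k+1) * (f t).card < ∑ t ∈ T, A.card * (k+1) :=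
      Finset.sum_lt_sum_of_nonempty hTne hcon
    rw [← Finset.mul_sum, hsum, Finset.sum_const, hTcard, smul_eq_mul] at hlt
    exact lt_irrefl _ hlt
  obtain ⟨t, htT, hineq⟩ := hpig
  refine ⟨f t, Finset.filter_subset _ _, ?_, ?_⟩
  · intro x hx y hy hxy
    rw [hf, Finset.mem_filter, Finset.mem_Icc] at hx hy hxy
    have key : (t * (((x + y : ℤ)) : ZMod p)).val
        = ((t * ((x:ℤ):ZMod p)).val + (t * ((y:ℤ):ZMod p)).val) % p := by
      rw [show (((x + y : ℤ)) : ZMod p) = ((x:ℤ):ZMod p) + ((y:ℤ):ZMod p) by push_cast; ring,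
        mul_add, ZMod.val_add]
    have h1 := hx.2
    have h2 := hy.2
    have h3 := hxy.2
    rw [key] at h3
    rcases Nat.lt_or_ge ((t * ((x:ℤ):ZMod p)).val + (t * ((y:ℤ):ZMod p)).val) p with hlt | hge
    · rw [Nat.mod_eq_of_lt hlt] at h3; omega
    · rw [Nat.mod_eq_sub_mod hge, Nat.mod_eq_of_lt (by omega)] at h3; omega
  · have h3 : A.card ≤ 3 * (f t).card := by
      have h4 : A.card * (k+1) ≤ (3 * (f t).card) * (k+1) := by nlinarith
      exact Nat.le_of_mul_le_mul_right h4 (by omega)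
    rw [div_le_iff₀ (by norm_num)]
    calc (A.card : ℝ) ≤ 3 * (f t).card := by exact_mod_cast h3
      _ = (f t).card * 3 := by ring
end

section
/- Every finite set A of n nonzero integers with n ≥ 1 contains a sum-free subset of size at least (n+1)/3. -/
/-- Every finite set `A` of `n ≥ 1` nonzero integers contains a sum-free subset of size
at least `(n+1)/3`. -/
theorem stmt_1 (A : Finset ℤ) (hA : (0 : ℤ) ∉ A) (hA1 : 1 ≤ A.card) :
    ∃ A' ⊆ A, (∀ x ∈ A', ∀ y ∈ A', x + y ∉ A') ∧
      ((A.card : ℝ) + 1) / 3 ≤ (A'.card : ℝ) := by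
  classical
  set n := A.card with hn
  set P : ℕ := ∏ a ∈ A, a.natAbs with hP
  have hPpos : 0 < P := Finset.prod_pos (fun a ha => Int.natAbs_pos.mpr (by rintro rfl; exact hA ha))
  set p : ℕ := 3 * P - 1 with hp
  have hp2 : 2 ≤ p := by omega
  haveI : NeZero p := ⟨by omega⟩
  -- coprimality of P and p
  have hcop : Nat.Coprime P p := by
    have h1 : Nat.gcd P p ∣ 3 * P - p := Nat.dvd_sub ((Nat.gcd_dvd_left P p).mul_left 3) (Nat.gcd_dvd_right P p)
    have : 3 * P - p = 1 := by omega
    rw [this] at h1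
    exact Nat.dvd_one.mp h1
  -- every element of A is a unit mod p
  have hunit : ∀ a ∈ A, IsUnit ((a : ℤ) : ZMod p) := by
    intro a ha
    have hdvd : a.natAbs ∣ P := Finset.dvd_prod_of_mem _ ha
    have hc : Nat.Coprime a.natAbs p := Nat.Coprime.coprime_dvd_left hdvd hcop
    have hu : IsUnit ((a.natAbs : ℕ) : ZMod p) := (ZMod.isUnit_iff_coprime _ p).mpr hc
    rcases Int.natAbs_eq a with h | h
    · rw [h, Int.cast_natCast]; exact hu
    · rw [h, Int.cast_neg, Int.cast_natCast]; exact hu.neg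
  -- the middle third
  set M : Finset (ZMod p) := Finset.univ.filter (fun x => P ≤ x.val ∧ x.val ≤ 2 * P - 1) with hM
  have hmemM : ∀ x : ZMod p, x ∈ M ↔ P ≤ x.val ∧ x.val ≤ 2 * P - 1 := by
    intro x; simp [hM]
  -- M is sum-free in ZMod p
  have hMsf : ∀ u ∈ M, ∀ v ∈ M, u + v ∉ M := by
    intro u hu v hv hs
    rw [hmemM] at hu hv hs
    have hval : (u + v).val = (u.val + v.val) % p := ZMod.val_add u v
    have hup : u.val < p := ZMod.val_lt u
    have hvp : v.val < p := ZMod.val_lt v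
    rcases lt_or_ge (u.val + v.val) p with h | h
    · rw [Nat.mod_eq_of_lt h] at hval; omega
    · have : (u.val + v.val) % p = u.val + v.val - p := by
        rw [Nat.mod_eq_sub_mod h, Nat.mod_eq_of_lt (by omega)]
      rw [this] at hval; omega
  -- cardinality of M
  have hMcard : M.card = P := by
    have hIco : (Finset.Ico P (2 * P)).card = P := by rw [Nat.card_Ico]; omega
    rw [← hIco]
    apply Finset.card_bij' (fun x _ => ZMod.val x) (fun v _ => (v : ZMod p))
    · intro x hx; rw [hmemM] at hx; simp only [Finset.mem_Ico]; omega
    · intro v hv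
      simp only [Finset.mem_Ico] at hv
      rw [hmemM, ZMod.val_cast_of_lt (by omega)]
      omega
    · intro x hx; exact ZMod.natCast_rightInverse x
    · intro v hv
      simp only [Finset.mem_Ico] at hv
      exact ZMod.val_cast_of_lt (by omega)
  -- for each a in A, the number of dilations θ with θ * a ∈ M is P
  have hcount : ∀ a ∈ A, (Finset.univ.filter (fun θ : ZMod p => θ * (a : ZMod p) ∈ M)).card = P := by
    intro a ha
    rcases hunit a ha with ⟨u, hu⟩
    rw [← hMcard]
    apply Finset.card_bij' (fun θ _ => θ * (a : ZMod p)) (fun x _ => x * ((u⁻¹ : (ZMod p)ˣ) : ZMod p))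
    · intro θ hθ; simpa using hθ
    · intro x hx
      simp only [Finset.mem_filter, Finset.mem_univ, true_and]
      rw [mul_assoc, ← hu, ← Units.val_mul, inv_mul_cancel, Units.val_one, mul_one]
      exact hx
    · intro θ hθ
      rw [mul_assoc, ← hu, ← Units.val_mul, mul_inv_cancel, Units.val_one, mul_one]
    · intro x hx
      rw [mul_assoc, ← hu, ← Units.val_mul, inv_mul_cancel, Units.val_one, mul_one]
  -- double counting
  have hsum : ∑ θ : ZMod p, (A.filter (fun a : ℤ => θ * ((a : ℤ) : ZMod p) ∈ M)).card = n * P := by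
    have : ∑ θ : ZMod p, (A.filter (fun a : ℤ => θ * ((a : ℤ) : ZMod p) ∈ M)).card
        = ∑ θ : ZMod p, ∑ a ∈ A, if θ * (a : ZMod p) ∈ M then 1 else 0 := by
      simp only [Finset.card_filter]
    rw [this, Finset.sum_comm]
    have : ∀ a ∈ A, ∑ θ : ZMod p, (if θ * (a : ZMod p) ∈ M then 1 else 0) = P := by
      intro a ha
      rw [← hcount a ha, Finset.card_filter]
    rw [Finset.sum_congr rfl this, Finset.sum_const, smul_eq_mul]
  -- find a good θ
  have hex : ∃ θ : ZMod p, n + 1 ≤ 3 * (A.filter (fun a : ℤ => θ * ((a : ℤ) : ZMod p) ∈ M)).card := by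
    by_contra hcon
    push_neg at hcon
    have hle : ∀ θ : ZMod p, 3 * (A.filter (fun a : ℤ => θ * ((a : ℤ) : ZMod p) ∈ M)).card ≤ n := by
      intro θ; have := hcon θ; omega
    have : 3 * (n * P) ≤ n * p := by
      calc 3 * (n * P) = ∑ θ : ZMod p, 3 * (A.filter (fun a : ℤ => θ * ((a : ℤ) : ZMod p) ∈ M)).card := by
            rw [← Finset.mul_sum, hsum]
        _ ≤ ∑ _θ : ZMod p, n := Finset.sum_le_sum (fun θ _ => hle θ)
        _ = n * p := by rw [Finset.sum_const, smul_eq_mul, Finset.card_univ, ZMod.card, mul_comm]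
    have h3 : n * p + n = 3 * (n * P) := by
      have hpe : p + 1 = 3 * P := by omega
      calc n * p + n = n * (p + 1) := by ring
        _ = n * (3 * P) := by rw [hpe]
        _ = 3 * (n * P) := by ring
    omega
  obtain ⟨θ, hθ⟩ := hex
  refine ⟨A.filter (fun a : ℤ => θ * ((a : ℤ) : ZMod p) ∈ M), Finset.filter_subset _ _, ?_, ?_⟩
  · intro x hx y hy hxy
    simp only [Finset.mem_filter] at hx hy hxy
    have : θ * ((x + y : ℤ) : ZMod p) = θ * (x : ZMod p) + θ * (y : ZMod p) := by push_cast; ring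
    exact hMsf _ hx.2 _ hy.2 (this ▸ hxy.2)
  · rw [div_le_iff₀ (by norm_num)]
    have : (n : ℝ) + 1 ≤ 3 * ((A.filter (fun a : ℤ => θ * ((a : ℤ) : ZMod p) ∈ M)).card : ℝ) := by
      exact_mod_cast hθ
    linarith
end

section
/- Let f(n) denote the largest k such that every set of n nonzero integers contains a sum-free subset of size k. Then f is subadditive: f(m+n) ≤ f(m) + f(n) for all positive integers m, n. -/
/-- If `f n` is the largest `k` such that every set of `n` nonzero integers contains a
sum-free subset of size `k`, then `f` is subadditive. -/
theorem stmt_2 (f : ℕ → ℕ)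
    (hf : ∀ n : ℕ, IsGreatest
      {k : ℕ | ∀ A : Finset ℤ, (0 : ℤ) ∉ A → A.card = n →
        ∃ A' ⊆ A, (∀ x ∈ A', ∀ y ∈ A', x + y ∉ A') ∧ k ≤ A'.card} (f n)) :
    ∀ m n : ℕ, 1 ≤ m → 1 ≤ n → f (m + n) ≤ f m + f n := by
  intro m n _ _
  have extremal : ∀ p : ℕ, ∃ A : Finset ℤ, (0:ℤ) ∉ A ∧ A.card = p ∧
      ∀ A' ⊆ A, (∀ x ∈ A', ∀ y ∈ A', x + y ∉ A') → A'.card ≤ f p := by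
    intro p
    by_contra h
    push_neg at h
    have h2 : f p + 1 ≤ f p := (hf p).2 (by
      intro A hA0 hAc
      obtain ⟨A', hsub, hsf, hc⟩ := h A hA0 hAc
      exact ⟨A', hsub, hsf, hc⟩)
    omega
  obtain ⟨A, hA0, hAm, hAmax⟩ := extremal m
  obtain ⟨B, hB0, hBn, hBmax⟩ := extremal n
  set M : ℤ := ((A.sup Int.natAbs + 1 : ℕ) : ℤ) with hMdef
  have hMpos : 0 < M := by positivity
  have hMnatAbs : M.natAbs = A.sup Int.natAbs + 1 := Int.natAbs_natCast _
  have hMb : ∀ b ∈ B, M * b ∉ A := by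
    intro b hb hcontra
    have hbne : b ≠ 0 := fun h => hB0 (h ▸ hb)
    have h1 : (M * b).natAbs = M.natAbs * b.natAbs := Int.natAbs_mul _ _
    have hb1 : 1 ≤ b.natAbs := Int.natAbs_pos.mpr hbne
    have hle : (M * b).natAbs ≤ A.sup Int.natAbs := Finset.le_sup hcontra
    have : M.natAbs ≤ M.natAbs * b.natAbs := Nat.le_mul_of_pos_right _ (by omega)
    omega
  have hMne : M ≠ 0 := ne_of_gt hMpos
  set I : Finset ℤ := B.image (fun b => M * b) with hIdef
  have hIcard : I.card = n := by
    rw [hIdef, Finset.card_image_of_injective B (mul_right_injective₀ hMne), hBn]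
  have hdisj : Disjoint A I := by
    rw [Finset.disjoint_left]
    intro x hxA hxI
    rw [hIdef, Finset.mem_image] at hxI
    obtain ⟨b, hb, rfl⟩ := hxI
    exact hMb b hb hxA
  have hC0 : (0:ℤ) ∉ A ∪ I := by
    rw [Finset.mem_union]
    rintro (h | h)
    · exact hA0 h
    · rw [hIdef, Finset.mem_image] at h
      obtain ⟨b, hb, hb0⟩ := h
      have : b = 0 := by
        rcases mul_eq_zero.mp hb0 with h' | h'
        · exact absurd h' hMne
        · exact h'
      exact hB0 (this ▸ hb)
  have hCcard : (A ∪ I).card = m + n := by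
    rw [Finset.card_union_of_disjoint hdisj, hAm, hIcard]
  obtain ⟨S, hSsub, hSsf, hScard⟩ := (hf (m + n)).1 (A ∪ I) hC0 hCcard
  -- split S
  have hSA : (S ∩ A).card ≤ f m := by
    apply hAmax _ Finset.inter_subset_right
    intro x hx y hy hxy
    exact hSsf x (Finset.mem_inter.mp hx).1 y (Finset.mem_inter.mp hy).1
      (Finset.mem_inter.mp hxy).1
  set T : Finset ℤ := B.filter (fun b => M * b ∈ S) with hTdef
  have hT : T.card ≤ f n := by
    apply hBmax _ (Finset.filter_subset _ _)
    intro x hx y hy hxy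
    rw [Finset.mem_filter] at hx hy hxy
    have : M * x + M * y = M * (x + y) := by ring
    exact hSsf (M * x) hx.2 (M * y) hy.2 (this ▸ hxy.2)
  have hSI : (S ∩ I).card ≤ T.card := by
    have hsub : S ∩ I ⊆ T.image (fun b => M * b) := by
      intro x hx
      rw [Finset.mem_inter] at hx
      rw [hIdef, Finset.mem_image] at hx
      obtain ⟨hxS, b, hb, rfl⟩ := hx
      exact Finset.mem_image.mpr ⟨b, Finset.mem_filter.mpr ⟨hb, hxS⟩, rfl⟩
    calc (S ∩ I).card ≤ (T.image (fun b => M * b)).card := Finset.card_le_card hsub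
      _ ≤ T.card := Finset.card_image_le
  have hsplit : S.card ≤ (S ∩ A).card + (S ∩ I).card := by
    calc S.card = (S ∩ (A ∪ I)).card := by
            rw [Finset.inter_eq_left.mpr hSsub]
      _ = ((S ∩ A) ∪ (S ∩ I)).card := by rw [Finset.inter_union_distrib_left]
      _ ≤ (S ∩ A).card + (S ∩ I).card := Finset.card_union_le _ _
  omega
end

section
/- Let N ≥ 1 and let p : {1,…,N} → [0,1] be a function. Choose a random subset A ⊆ {1,…,N} by including each n independently with probability p(n), and set X_n = 1_A(n) − p(n). Then the expectation of (1/N³) · Σ_{n₁+n₂=n₃+n₄, n_i ∈ {1,…,N}} X_{n₁} X_{n₂} X_{n₃} X_{n₄} is O(1/N). -/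
/-!
Expanding the fourth moment, `𝔼[X_{n₁} X_{n₂} X_{n₃} X_{n₄}]` vanishes as soon as one index occurs
exactly once, by independence and `𝔼 X_n = 0`. Among the additive quadruples
`n₁ + n₂ = n₃ + n₄` this leaves only the trivial ones `{n₃, n₄} = {n₁, n₂}`, at most `2N²` of them,
each contributing at most `1`. Hence the normalised sum is at most `2N² / N³ = 2 / N`.
-/

open MeasureTheory

lemma integral_mul_mul_mul_le_one {Ω : Type*} [MeasurableSpace Ω] {μ : Measure Ω}
    [IsProbabilityMeasure μ] {f g h k : Ω → ℝ} (hf : ∀ ω, |f ω| ≤ 1) (hg : ∀ ω, |g ω| ≤ 1)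
    (hh : ∀ ω, |h ω| ≤ 1) (hk : ∀ ω, |k ω| ≤ 1) :
    ∫ ω, f ω * g ω * h ω * k ω ∂μ ≤ 1 := by
  have hbound : ∀ ω, ‖f ω * g ω * h ω * k ω‖ ≤ 1 := fun ω => by
    simp only [norm_mul, Real.norm_eq_abs]
    exact mul_le_one₀ (mul_le_one₀ (mul_le_one₀ (hf ω) (abs_nonneg _) (hg ω)) (abs_nonneg _)
      (hh ω)) (abs_nonneg _) (hk ω)
  calc ∫ ω, f ω * g ω * h ω * k ω ∂μ ≤ ‖∫ ω, f ω * g ω * h ω * k ω ∂μ‖ := Real.le_norm_self _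
    _ ≤ 1 * μ.real Set.univ := norm_integral_le_of_norm_le_const (.of_forall hbound)
    _ = 1 := by simp

lemma Finset.sum_sum_ite_and_eq_le_one {α : Type*} [DecidableEq α] (s t : Finset α) (a b : α) :
    ∑ i ∈ s, ∑ j ∈ t, (if i = a ∧ j = b then (1 : ℝ) else 0) ≤ 1 := by
  simp only [ite_and, Finset.sum_ite_eq', Finset.sum_ite_irrel, Finset.sum_const_zero]
  split_ifs <;> norm_num

namespace ProbabilityTheory

variable {Ω ι : Type*} [MeasurableSpace Ω] {μ : Measure Ω}

lemma iIndepFun.indepFun_mul_mul_right {β : Type*} [MeasurableSpace β] [CommMonoid β]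
    [MeasurableMul₂ β] {X : ι → Ω → β} (hX : iIndepFun X μ) (hm : ∀ i, Measurable (X i))
    {i a b c : ι} (hia : i ≠ a) (hib : i ≠ b) (hic : i ≠ c) :
    IndepFun (X i) (X a * X b * X c) μ := by
  classical
  have h := hX.indepFun_finset {i} {a, b, c} (by simp [hia, hib, hic]) hm
  exact h.comp (φ := fun v : ({i} : Finset ι) → β => v ⟨i, by simp⟩)
    (ψ := fun v : ({a, b, c} : Finset ι) → β =>
      v ⟨a, by simp⟩ * v ⟨b, by simp⟩ * v ⟨c, by simp⟩)
    (_mγ := inferInstance) (_mγ' := inferInstance) (measurable_pi_apply _) (by fun_prop)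

lemma iIndepFun.integral_mul_mul_mul_eq_zero {X : ι → Ω → ℝ} (hX : iIndepFun X μ)
    (hm : ∀ i, Measurable (X i)) {i a b c : ι} (hia : i ≠ a) (hib : i ≠ b) (hic : i ≠ c)
    (hi : ∫ ω, X i ω ∂μ = 0) :
    ∫ ω, X i ω * (X a ω * X b ω * X c ω) ∂μ = 0 := by
  have := (hX.indepFun_mul_mul_right hm hia hib hic).integral_mul_eq_mul_integral
    (hm i).aestronglyMeasurable (((hm a).mul (hm b)).mul (hm c)).aestronglyMeasurable
  simpa [hi] using this

lemma iIndepFun.integral_mul_mul_mul_eq_zero_of_add_eq_add {X : ℕ → Ω → ℝ}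
    (hX : iIndepFun X μ) (hm : ∀ n, Measurable (X n)) (h0 : ∀ n, ∫ ω, X n ω ∂μ = 0)
    {n₁ n₂ n₃ n₄ : ℕ} (hadd : n₁ + n₂ = n₃ + n₄)
    (hne : ¬((n₃ = n₁ ∧ n₄ = n₂) ∨ (n₃ = n₂ ∧ n₄ = n₁))) :
    ∫ ω, X n₁ ω * X n₂ ω * X n₃ ω * X n₄ ω ∂μ = 0 := by
  -- a nontrivial additive quadruple has an index occurring exactly once: `n₁`, or else `n₃`
  obtain ⟨h12, h13, h14⟩ | ⟨h31, h32, h34⟩ :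
      (n₁ ≠ n₂ ∧ n₁ ≠ n₃ ∧ n₁ ≠ n₄) ∨ (n₃ ≠ n₁ ∧ n₃ ≠ n₂ ∧ n₃ ≠ n₄) := by omega
  · simpa only [mul_assoc] using hX.integral_mul_mul_mul_eq_zero hm h12 h13 h14 (h0 n₁)
  · rw [← hX.integral_mul_mul_mul_eq_zero hm h31 h32 h34 (h0 n₃)]
    congr 1 with ω
    ring

lemma iIndepFun.additiveQuadruple_moment_le [IsProbabilityMeasure μ] {X : ℕ → Ω → ℝ}
    (hX : iIndepFun X μ) (hm : ∀ n, Measurable (X n)) (hb : ∀ n ω, |X n ω| ≤ 1)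
    (h0 : ∀ n, ∫ ω, X n ω ∂μ = 0) (n₁ n₂ n₃ n₄ : ℕ) :
    (if n₁ + n₂ = n₃ + n₄ then ∫ ω, X n₁ ω * X n₂ ω * X n₃ ω * X n₄ ω ∂μ else 0) ≤
      (if n₃ = n₁ ∧ n₄ = n₂ then 1 else 0) + (if n₃ = n₂ ∧ n₄ = n₁ then 1 else 0) := by
  have hle := integral_mul_mul_mul_le_one (μ := μ) (hb n₁) (hb n₂) (hb n₃) (hb n₄)
  by_cases hadd : n₁ + n₂ = n₃ + n₄
  · by_cases hne : (n₃ = n₁ ∧ n₄ = n₂) ∨ (n₃ = n₂ ∧ n₄ = n₁)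
    · split_ifs <;> first | linarith | tauto
    · rw [if_pos hadd, hX.integral_mul_mul_mul_eq_zero_of_add_eq_add hm h0 hadd hne]
      positivity
  · rw [if_neg hadd]
    positivity

end ProbabilityTheory

/-- If `A ⊆ {1,…,N}` is chosen randomly with `ℙ(n ∈ A) = p n` independently and
`X n = 1_A(n) − p n`, then the expectation of
`(1/N³) Σ_{n₁+n₂=n₃+n₄} X_{n₁} X_{n₂} X_{n₃} X_{n₄}` is `O(1/N)`. -/
theorem stmt_5 : ∃ C : ℝ, 0 < C ∧ ∀ (N : ℕ), 1 ≤ N →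
    ∀ (Ω : Type) (_ : MeasurableSpace Ω) (μ : Measure Ω),
    IsProbabilityMeasure μ →
    ∀ X : ℕ → Ω → ℝ, ProbabilityTheory.iIndepFun X μ →
    (∀ n, Measurable (X n)) → (∀ n ω, |X n ω| ≤ 1) →
    (∀ n, ∫ ω, X n ω ∂μ = 0) →
    (1 / (N : ℝ) ^ 3) * ∑ n₁ ∈ Finset.Icc 1 N, ∑ n₂ ∈ Finset.Icc 1 N,
      ∑ n₃ ∈ Finset.Icc 1 N, ∑ n₄ ∈ Finset.Icc 1 N,
      (if n₁ + n₂ = n₃ + n₄ then ∫ ω, X n₁ ω * X n₂ ω * X n₃ ω * X n₄ ω ∂μ else 0)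
      ≤ C / N := by
  refine ⟨2, two_pos, fun N _ Ω _ μ _ X hX hm hb h0 => ?_⟩
  set s := Finset.Icc 1 N
  have hsum : ∑ n₁ ∈ s, ∑ n₂ ∈ s, ∑ n₃ ∈ s, ∑ n₄ ∈ s,
      (if n₁ + n₂ = n₃ + n₄ then ∫ ω, X n₁ ω * X n₂ ω * X n₃ ω * X n₄ ω ∂μ else 0) ≤
      ∑ _n₁ ∈ s, ∑ _n₂ ∈ s, (1 + 1 : ℝ) := by
    gcongr with n₁ _ n₂ _
    calc _ ≤ ∑ n₃ ∈ s, ∑ n₄ ∈ s,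
          ((if n₃ = n₁ ∧ n₄ = n₂ then 1 else 0) + (if n₃ = n₂ ∧ n₄ = n₁ then (1 : ℝ) else 0)) := by
          gcongr with n₃ _ n₄ _
          exact hX.additiveQuadruple_moment_le hm hb h0 n₁ n₂ n₃ n₄
      _ ≤ 1 + 1 := by
          simp only [Finset.sum_add_distrib]
          exact add_le_add (s.sum_sum_ite_and_eq_le_one s n₁ n₂)
            (s.sum_sum_ite_and_eq_le_one s n₂ n₁)
  have hs : (s.card : ℝ) = N := by simp [s]
  calc _ ≤ 1 / (N : ℝ) ^ 3 * ∑ _n₁ ∈ s, ∑ _n₂ ∈ s, (1 + 1 : ℝ) := by gcongr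
    _ = 2 / N := by
      simp only [Finset.sum_const, nsmul_eq_mul, hs]
      field_simp
      ring
end

section
/- Let q, M ≥ 1 and let α : ℤ/qℤ × {1,…,M} → [0,1]. For (x,y) ∈ ℤ/qℤ × {−M,…,M}, define α̃(x,y) as the maximum of α(a,i) + α(a',i') over all pairs (a,i), (a',i') with α(a,i) > 0, α(a',i') > 0, a − a' = x, and i − i' ∈ {y, y−1} (with α̃(x,y) = 0 if no such pair exists). Then Σ_{x,y} α̃(x,y) ≥ 4 · Σ_{a,i} α(a,i). -/
/-!
Fix a row `a₀` of maximal mass `C = ∑ᵢ α(a₀, i)` and a row `a` of mass `0 < B ≤ C`; write `β = α(a, ·)`,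
`γ = α(a₀, ·)` and `b, c` for their maxima. At each height `0 < l < b + c` the superlevel sets
`I = {β > l b / (b + c)}` and `J = {γ > l c / (b + c)}` are nonempty, and the `|I| + |J|` distinct
points of `(I - max J) ∪ (max I - J + 1)` all carry `α̃(a - a₀, ·) > l`. Integrating this
one-dimensional Brunn–Minkowski count over `l` gives
`∑_y α̃(a - a₀, y) ≥ (b + c) (B / b + C / c) ≥ 3B + C ≥ 4B`; the translation `a ↦ a - a₀` then
turns the sum over rows into the sum over all of `α̃`.
-/

open MeasureTheory Finset

theorem card_add_card_le_card_of_forall_sub_mem {I J Y : Finset ℤ} (hI : I.Nonempty)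
    (hJ : J.Nonempty) (hY : ∀ i ∈ I, ∀ j ∈ J, i - j ∈ Y ∧ i - j + 1 ∈ Y) :
    #I + #J ≤ #Y := by
  set i₀ := I.max' hI
  set j₀ := J.max' hJ
  have hdisj : Disjoint (I.image (· - j₀)) (J.image (i₀ - · + 1)) := by
    refine disjoint_left.2 ?_
    simp only [mem_image]
    rintro _ ⟨i, hi, rfl⟩ ⟨j, hj, hij⟩
    have := I.le_max' i hi
    have := J.le_max' j hj
    omega
  calc #I + #J = #(I.image (· - j₀) ∪ J.image (i₀ - · + 1)) := by
        rw [card_union_of_disjoint hdisj, card_image_of_injective _ sub_left_injective,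
          card_image_of_injective _ (fun j j' h => by simpa using h)]
    _ ≤ #Y := by
        refine card_le_card (union_subset ?_ ?_) <;> intro y <;> simp only [mem_image]
        · rintro ⟨i, hi, rfl⟩
          exact (hY i hi j₀ (J.max'_mem hJ)).1
        · rintro ⟨j, hj, rfl⟩
          exact (hY i₀ (I.max'_mem hI) j hj).2

theorem ite_lt_eq_indicator (c l : ℝ) :
    (if l < c then 1 else 0 : ℝ) = (Set.Iio c).indicator 1 l := by
  simp [Set.indicator_apply]

theorem integrableOn_indicator_Iio_Ioo (c a b : ℝ) :
    IntegrableOn ((Set.Iio c).indicator (1 : ℝ → ℝ)) (Set.Ioo a b) :=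
  (integrableOn_const measure_Ioo_lt_top.ne).indicator measurableSet_Iio

theorem integrableOn_card_filter_lt {ι : Type*} (s : Finset ι) (f : ι → ℝ) (L : ℝ) :
    IntegrableOn (fun l => (#{i ∈ s | l < f i} : ℝ)) (Set.Ioo 0 L) := by
  simp_rw [natCast_card_filter, ite_lt_eq_indicator]
  exact integrable_finsetSum _ fun i _ => integrableOn_indicator_Iio_Ioo _ _ _

theorem integral_card_filter_lt {ι : Type*} (s : Finset ι) (f : ι → ℝ) (L : ℝ) :
    ∫ l in Set.Ioo 0 L, (#{i ∈ s | l < f i} : ℝ) = ∑ i ∈ s, max 0 (min (f i) L) := by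
  simp_rw [natCast_card_filter, ite_lt_eq_indicator]
  rw [integral_finsetSum _ fun i _ => integrableOn_indicator_Iio_Ioo _ _ _]
  refine sum_congr rfl fun i _ => ?_
  rw [setIntegral_indicator measurableSet_Iio, Set.Ioo_inter_Iio, Pi.one_def,
    setIntegral_const, Real.volume_real_Ioo, smul_eq_mul, mul_one, sub_zero, max_comm, min_comm]

theorem add_mul_sum_div_add_sum_div_le_sum {s t : Finset ℤ}
    (hst : ∀ i ∈ s, ∀ j ∈ s, i - j ∈ t ∧ i - j + 1 ∈ t) {β γ D : ℤ → ℝ}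
    (hD0 : ∀ y ∈ t, 0 ≤ D y)
    (hD : ∀ i ∈ s, ∀ j ∈ s, 0 < β i → 0 < γ j →
      β i + γ j ≤ D (i - j) ∧ β i + γ j ≤ D (i - j + 1))
    {b c : ℝ} (hb : IsGreatest (β '' s) b) (hc : IsGreatest (γ '' s) c) (hb0 : 0 < b)
    (hc0 : 0 < c) :
    (b + c) * (∑ i ∈ s, β i / b + ∑ j ∈ s, γ j / c) ≤ ∑ y ∈ t, D y := by
  set L := b + c
  obtain ⟨⟨i₀, hi₀, hβi₀⟩, hβ_le⟩ := hb
  obtain ⟨⟨j₀, hj₀, hγj₀⟩, hγ_le⟩ := hc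
  have hβ_le' : ∀ i ∈ s, L * (β i / b) ≤ L := fun i hi => by
    have := hβ_le ⟨i, hi, rfl⟩
    rw [mul_div_assoc', div_le_iff₀ hb0]; nlinarith
  have hγ_le' : ∀ j ∈ s, L * (γ j / c) ≤ L := fun j hj => by
    have := hγ_le ⟨j, hj, rfl⟩
    rw [mul_div_assoc', div_le_iff₀ hc0]; nlinarith
  have hcount : ∀ l ∈ Set.Ioo 0 L, (#{i ∈ s | l < L * (β i / b)} : ℝ) +
      #{j ∈ s | l < L * (γ j / c)} ≤ #{y ∈ t | l < D y} := by
    rintro l ⟨hl0, hlL⟩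
    have hβ₀ : l < L * (β i₀ / b) := by rwa [hβi₀, div_self hb0.ne', mul_one]
    have hγ₀ : l < L * (γ j₀ / c) := by rwa [hγj₀, div_self hc0.ne', mul_one]
    refine mod_cast card_add_card_le_card_of_forall_sub_mem ⟨i₀, mem_filter.2 ⟨hi₀, hβ₀⟩⟩
      ⟨j₀, mem_filter.2 ⟨hj₀, hγ₀⟩⟩ fun i hi j hj => ?_
    simp only [mem_filter] at hi hj ⊢
    rw [mul_div_assoc', lt_div_iff₀ hb0] at hi
    rw [mul_div_assoc', lt_div_iff₀ hc0] at hj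
    have hβi : 0 < β i := by nlinarith
    have hγj : 0 < γ j := by nlinarith
    have hl : l < β i + γ j := by nlinarith
    obtain ⟨h₁, h₂⟩ := hD i hi.1 j hj.1 hβi hγj
    exact ⟨⟨(hst i hi.1 j hj.1).1, hl.trans_le h₁⟩, ⟨(hst i hi.1 j hj.1).2, hl.trans_le h₂⟩⟩
  calc (b + c) * (∑ i ∈ s, β i / b + ∑ j ∈ s, γ j / c)
      = ∑ i ∈ s, L * (β i / b) + ∑ j ∈ s, L * (γ j / c) := by rw [mul_add, mul_sum, mul_sum]
    _ ≤ ∑ i ∈ s, max 0 (min (L * (β i / b)) L) + ∑ j ∈ s, max 0 (min (L * (γ j / c)) L) := by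
      gcongr with i hi j hj
      · rw [min_eq_left (hβ_le' i hi)]; exact le_max_right _ _
      · rw [min_eq_left (hγ_le' j hj)]; exact le_max_right _ _
    _ = ∫ l in Set.Ioo 0 L, ((#{i ∈ s | l < L * (β i / b)} : ℝ) +
          #{j ∈ s | l < L * (γ j / c)}) := by
      rw [integral_add (integrableOn_card_filter_lt _ _ _) (integrableOn_card_filter_lt _ _ _),
        integral_card_filter_lt, integral_card_filter_lt]
    _ ≤ ∫ l in Set.Ioo 0 L, (#{y ∈ t | l < D y} : ℝ) :=
      setIntegral_mono_on ((integrableOn_card_filter_lt _ _ _).add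
        (integrableOn_card_filter_lt _ _ _)) (integrableOn_card_filter_lt _ _ _)
        measurableSet_Ioo hcount
    _ = ∑ y ∈ t, max 0 (min (D y) L) := integral_card_filter_lt _ _ _
    _ ≤ ∑ y ∈ t, D y := sum_le_sum fun y hy => max_le (hD0 y hy) (min_le_left _ _)

theorem three_mul_sum_add_sum_le_sum {s t : Finset ℤ}
    (hst : ∀ i ∈ s, ∀ j ∈ s, i - j ∈ t ∧ i - j + 1 ∈ t) {β γ D : ℤ → ℝ}
    (hD0 : ∀ y ∈ t, 0 ≤ D y)
    (hD : ∀ i ∈ s, ∀ j ∈ s, 0 < β i → 0 < γ j →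
      β i + γ j ≤ D (i - j) ∧ β i + γ j ≤ D (i - j + 1))
    (hB : 0 < ∑ i ∈ s, β i) (hBC : ∑ i ∈ s, β i ≤ ∑ j ∈ s, γ j) :
    3 * ∑ i ∈ s, β i + ∑ j ∈ s, γ j ≤ ∑ y ∈ t, D y := by
  have hs : s.Nonempty := nonempty_of_sum_ne_zero hB.ne'
  obtain ⟨i₀, hi₀, hβ_le⟩ := s.exists_max_image β hs
  obtain ⟨j₀, hj₀, hγ_le⟩ := s.exists_max_image γ hs
  have hb : 0 < β i₀ := by
    by_contra! h
    exact hB.not_ge (sum_nonpos fun i hi => (hβ_le i hi).trans h)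
  have hc : 0 < γ j₀ := by
    by_contra! h
    exact (hB.trans_le hBC).not_ge (sum_nonpos fun j hj => (hγ_le j hj).trans h)
  have key := add_mul_sum_div_add_sum_div_le_sum hst hD0 hD
    ⟨⟨i₀, hi₀, rfl⟩, by rintro _ ⟨i, hi, rfl⟩; exact hβ_le i hi⟩
    ⟨⟨j₀, hj₀, rfl⟩, by rintro _ ⟨j, hj, rfl⟩; exact hγ_le j hj⟩ hb hc
  rw [← sum_div, ← sum_div] at key
  refine le_trans ?_ key
  set B := ∑ i ∈ s, β i
  set C := ∑ j ∈ s, γ j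
  -- `(b + c) (B / b + C / c) - (3 B + C) = (B (b - c)² + (C - B) b²) / (b c)`
  rw [div_add_div _ _ hb.ne' hc.ne', mul_div_assoc', le_div_iff₀ (by positivity)]
  nlinarith [mul_nonneg hB.le (sq_nonneg (β i₀ - γ j₀)),
    mul_nonneg (sub_nonneg.2 hBC) (sq_nonneg (β i₀))]

section PairSums

variable {G : Type*} [AddGroup G] (α : G → ℤ → ℝ) (M : ℕ)

def pairSums (x : G) (y : ℤ) : Set ℝ :=
  {v : ℝ | ∃ a a' : G, ∃ i i' : ℤ,
    i ∈ Icc 1 (M : ℤ) ∧ i' ∈ Icc 1 (M : ℤ) ∧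
    0 < α a i ∧ 0 < α a' i' ∧ a - a' = x ∧ (i - i' = y ∨ i - i' = y - 1) ∧
    v = α a i + α a' i'}

noncomputable def maxPairSum (x : G) (y : ℤ) : ℝ :=
  sSup (insert 0 (pairSums α M x y))

variable [Fintype G]

theorem finite_pairSums (x : G) (y : ℤ) : (pairSums α M x y).Finite := by
  refine ((univ ×ˢ univ ×ˢ Icc 1 (M : ℤ) ×ˢ Icc 1 (M : ℤ)).finite_toSet.image
    fun p : G × G × ℤ × ℤ => α p.1 p.2.2.1 + α p.2.1 p.2.2.2).subset ?_
  rintro v ⟨a, a', i, i', hi, hi', -, -, -, -, rfl⟩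
  exact ⟨(a, a', i, i'), by simp_all, rfl⟩

theorem bddAbove_insert_pairSums (x : G) (y : ℤ) : BddAbove (insert 0 (pairSums α M x y)) :=
  ((finite_pairSums α M x y).insert 0).bddAbove

theorem maxPairSum_nonneg (x : G) (y : ℤ) : 0 ≤ maxPairSum α M x y :=
  le_csSup (bddAbove_insert_pairSums α M x y) (Set.mem_insert _ _)

theorem add_le_maxPairSum {a a' : G} {i i' y : ℤ} (hi : i ∈ Icc 1 (M : ℤ))
    (hi' : i' ∈ Icc 1 (M : ℤ)) (ha : 0 < α a i) (ha' : 0 < α a' i')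
    (hy : i - i' = y ∨ i - i' = y - 1) : α a i + α a' i' ≤ maxPairSum α M (a - a') y :=
  le_csSup (bddAbove_insert_pairSums α M _ y)
    (Set.mem_insert_of_mem _ ⟨a, a', i, i', hi, hi', ha, ha', rfl, hy, rfl⟩)

theorem four_mul_sum_le_sum_maxPairSum_sub {a₀ : G}
    (ha₀ : ∀ a, ∑ i ∈ Icc 1 (M : ℤ), α a i ≤ ∑ i ∈ Icc 1 (M : ℤ), α a₀ i) (a : G) :
    4 * ∑ i ∈ Icc 1 (M : ℤ), α a i ≤ ∑ y ∈ Icc (-(M : ℤ)) M, maxPairSum α M (a - a₀) y := by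
  have hD0 : 0 ≤ ∑ y ∈ Icc (-(M : ℤ)) M, maxPairSum α M (a - a₀) y :=
    sum_nonneg fun y _ => maxPairSum_nonneg α M _ y
  rcases le_or_gt (∑ i ∈ Icc 1 (M : ℤ), α a i) 0 with h | h
  · linarith
  have := three_mul_sum_add_sum_le_sum (t := Icc (-(M : ℤ)) M)
    (fun i hi j hj => by simp only [mem_Icc] at hi hj ⊢; omega)
    (fun y _ => maxPairSum_nonneg α M _ y)
    (fun i hi j hj hβ hγ => ⟨add_le_maxPairSum α M hi hj hβ hγ (.inl rfl),
      add_le_maxPairSum α M hi hj hβ hγ (.inr (by ring))⟩) h (ha₀ a)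
  linarith [ha₀ a]

theorem four_mul_sum_le_sum_maxPairSum :
    4 * ∑ a, ∑ i ∈ Icc 1 (M : ℤ), α a i ≤ ∑ x, ∑ y ∈ Icc (-(M : ℤ)) M, maxPairSum α M x y := by
  obtain ⟨a₀, -, ha₀⟩ := exists_max_image univ (fun a => ∑ i ∈ Icc 1 (M : ℤ), α a i)
    univ_nonempty
  calc 4 * ∑ a, ∑ i ∈ Icc 1 (M : ℤ), α a i
      ≤ ∑ a, ∑ y ∈ Icc (-(M : ℤ)) M, maxPairSum α M (a - a₀) y := by
        rw [mul_sum]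
        exact sum_le_sum fun a _ => four_mul_sum_le_sum_maxPairSum_sub α M
          (fun a => ha₀ a (mem_univ a)) a
    _ = ∑ x, ∑ y ∈ Icc (-(M : ℤ)) M, maxPairSum α M x y :=
        Fintype.sum_equiv (Equiv.subRight a₀) _ _ fun _ => rfl

end PairSums

theorem stmt_10_general (q M : ℕ) [NeZero q]
    (α : ZMod q → ℤ → ℝ) :
    4 * ∑ a : ZMod q, ∑ i ∈ Finset.Icc (1 : ℤ) M, α a i ≤
      ∑ x : ZMod q, ∑ y ∈ Finset.Icc (-(M : ℤ)) M,
        sSup (insert (0 : ℝ) {v : ℝ | ∃ a a' : ZMod q, ∃ i i' : ℤ,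
          i ∈ Finset.Icc (1 : ℤ) (M : ℤ) ∧ i' ∈ Finset.Icc (1 : ℤ) (M : ℤ) ∧
          0 < α a i ∧ 0 < α a' i' ∧ a - a' = x ∧ (i - i' = y ∨ i - i' = y - 1) ∧
          v = α a i + α a' i'}) :=
  four_mul_sum_le_sum_maxPairSum α M

/-- Brunn–Minkowski-type inequality for densities: `Σ α̃ ≥ 4 Σ α`, where `α̃(x,y)` is the
maximum of `α(a,i) + α(a',i')` over pairs with positive values, `a − a' = x` and
`i − i' ∈ {y, y−1}` (and `0` if no such pair exists). -/
theorem stmt_10 (q M : ℕ) [NeZero q] (hM : 1 ≤ M)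
    (α : ZMod q → ℤ → ℝ) (hα : ∀ a i, α a i ∈ Set.Icc (0 : ℝ) 1) :
    4 * ∑ a : ZMod q, ∑ i ∈ Finset.Icc (1 : ℤ) M, α a i ≤
      ∑ x : ZMod q, ∑ y ∈ Finset.Icc (-(M : ℤ)) M,
        sSup (insert (0 : ℝ) {v : ℝ | ∃ a a' : ZMod q, ∃ i i' : ℤ,
          i ∈ Finset.Icc (1 : ℤ) (M : ℤ) ∧ i' ∈ Finset.Icc (1 : ℤ) (M : ℤ) ∧
          0 < α a i ∧ 0 < α a' i' ∧ a - a' = x ∧ (i - i' = y ∨ i - i' = y - 1) ∧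
          v = α a i + α a' i'}) :=
  stmt_10_general q M α
end

section
/- Let q, M ≥ 1, η > 0, and let α : ℤ/qℤ × {1,…,M} → [0,1]. For (x,y) ∈ ℤ/qℤ × {−M,…,M}, define α̃(x,y) as the maximum of α(a,i) + α(a',i') over all pairs (a,i), (a',i') with α(a,i) > η, α(a',i') > η, a − a' = x, and i − i' ∈ {y, y−1} (α̃(x,y) = 0 if no such pair exists). Then Σ_{x,y} α̃(x,y) ≥ 4 · Σ_{a,i} α(a,i) − 4ηqM. -/
/-!
Discard the values `α ≤ η`; this costs at most `ηqM`, and the remaining support `A` lies in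
`ℤ/qℤ × [1, M]`. Every point of `D(A) = A - A + {(0,0), (0,1)}` receives from `α̃` the weight of
some pair of `A`, so it suffices to prove `4 Σ_A α ≤ Σ_{D(A)} α̃`. A layer-cake induction (lower
all weights by the smallest one `u`, delete a point where it is attained, and charge `2u` to
every point of `D(A)`) reduces this to the set inequality `2|A| ≤ |D(A)|`. For the latter, slice
`A` into columns `A_a ⊆ ℤ` and fix the longest column `A_{a₀}`: the column `a₀ - a` of `D(A)`
contains `A_{a₀} - A_a + {0, 1}`, which has at least `|A_{a₀}| + |A_a|` elements, and summing
over `a` gives at least `2|A|`.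
-/

open Finset
open scoped Pointwise

theorem Int.card_add_card_le_card_sub_add_zero_one {B C : Finset ℤ} (hB : B.Nonempty)
    (hC : C.Nonempty) : #B + #C ≤ #(B - C + {0, 1}) := by
  set m := B.max' hB
  set n := C.max' hC
  -- `B - n` lies at or below `m - n`, and `m + 1 - C` strictly above it.
  have hdisj : Disjoint (B.image (· - n)) (C.image (m + 1 - ·)) := by
    simp only [disjoint_left, mem_image]
    rintro _ ⟨b, hb, rfl⟩ ⟨c, hc, h⟩
    linarith [B.le_max' b hb, C.le_max' c hc]
  have hsub : B.image (· - n) ∪ C.image (m + 1 - ·) ⊆ B - C + {0, 1} := by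
    rintro _ h
    rcases mem_union.1 h with h | h <;> obtain ⟨x, hx, rfl⟩ := mem_image.1 h
    · exact mem_add.2 ⟨x - n, sub_mem_sub hx (C.max'_mem hC), 0, by simp, add_zero _⟩
    · exact mem_add.2 ⟨m - x, sub_mem_sub (B.max'_mem hB) hx, 1, by simp, by ring⟩
  calc #B + #C = #(B.image (· - n)) + #(C.image (m + 1 - ·)) := by
        rw [card_image_of_injective _ sub_left_injective,
          card_image_of_injective _ sub_right_injective]
    _ = #(B.image (· - n) ∪ C.image (m + 1 - ·)) := (card_union_of_disjoint hdisj).symm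
    _ ≤ #(B - C + {0, 1}) := card_le_card hsub

theorem Finset.two_mul_card_le_card_sub_add_zero_one {G : Type*} [AddGroup G] [DecidableEq G]
    (A : Finset (G × ℤ)) : 2 * #A ≤ #(A - A + {0, (0, 1)}) := by
  rcases A.eq_empty_or_nonempty with rfl | hA
  · simp
  set π := A.image Prod.fst
  set F : G → Finset ℤ := fun a => A.preimage (Prod.mk a) (Prod.mk_right_injective a).injOn
  have mem_F {a : G} {b : ℤ} : b ∈ F a ↔ (a, b) ∈ A := mem_preimage
  have card_A : #A = ∑ a ∈ π, #(F a) := by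
    rw [card_eq_sum_ones, sum_finset_product A π F fun p =>
      ⟨fun hp => ⟨mem_image_of_mem _ hp, mem_F.2 hp⟩, fun h => mem_F.1 h.2⟩]
    simp
  have F_nonempty : ∀ a ∈ π, (F a).Nonempty := by
    simp only [π, mem_image]
    rintro _ ⟨p, hp, rfl⟩
    exact ⟨p.2, mem_F.2 hp⟩
  obtain ⟨a₀, ha₀, hmax⟩ := π.exists_max_image (fun a => #(F a)) (hA.image _)
  set S : G → Finset (G × ℤ) := fun a => {a₀ - a} ×ˢ (F a₀ - F a + {0, 1})
  have hS : π.biUnion S ⊆ A - A + {0, (0, 1)} := by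
    simp only [subset_iff, mem_biUnion, mem_product, mem_singleton, mem_add, mem_sub, S]
    rintro ⟨_, _⟩ ⟨a, -, rfl, _, ⟨b, hb, c, hc, rfl⟩, e, he, rfl⟩
    refine ⟨_, ⟨(a₀, b), mem_F.1 hb, (a, c), mem_F.1 hc, rfl⟩, (0, e), ?_, by simp⟩
    rcases mem_insert.1 he with rfl | he
    · simp
    · simp [mem_singleton.1 he]
  have hdisj : (π : Set G).PairwiseDisjoint S := fun a _ a' _ h =>
    disjoint_product.2 (Or.inl (disjoint_singleton.2 (by simpa using h)))
  calc 2 * #A = #A + #A := two_mul _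
    _ ≤ #π * #(F a₀) + ∑ a ∈ π, #(F a) := by
      refine add_le_add ?_ card_A.le
      rw [card_A, ← smul_eq_mul, ← sum_const]
      exact sum_le_sum hmax
    _ = ∑ a ∈ π, (#(F a₀) + #(F a)) := by rw [sum_add_distrib, sum_const, smul_eq_mul]
    _ ≤ ∑ a ∈ π, #(S a) := sum_le_sum fun a ha => by
      simpa [S] using
        Int.card_add_card_le_card_sub_add_zero_one (F_nonempty a₀ ha₀) (F_nonempty a ha)
    _ = #(π.biUnion S) := (card_biUnion hdisj).symm
    _ ≤ #(A - A + {0, (0, 1)}) := card_le_card hS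

theorem Finset.two_mul_mul_sum_le_sum_sub_add {H : Type*} [AddGroup H] [DecidableEq H]
    (k : ℕ) (E A : Finset H) (hcard : ∀ B ⊆ A, k * #B ≤ #(B - B + E)) (γ N : H → ℝ)
    (hγ : ∀ p ∈ A, 0 ≤ γ p) (hN : ∀ p ∈ A, ∀ p' ∈ A, ∀ e ∈ E, γ p + γ p' ≤ N (p - p' + e)) :
    2 * k * ∑ p ∈ A, γ p ≤ ∑ z ∈ A - A + E, N z := by
  induction A using Finset.strongInduction generalizing γ N with | H A ih =>
  rcases A.eq_empty_or_nonempty with rfl | hA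
  · simp
  obtain ⟨p₀, hp₀, hmin⟩ := A.exists_min_image γ hA
  set u := γ p₀
  set A' := A.erase p₀
  have hN_ge : ∀ z ∈ A - A + E, 2 * u ≤ N z := by
    simp only [mem_add, mem_sub]
    rintro _ ⟨_, ⟨p, hp, p', hp', rfl⟩, e, he, rfl⟩
    linarith [hmin p hp, hmin p' hp', hN p hp p' hp' e he]
  have ih' : 2 * k * ∑ p ∈ A', (γ p - u) ≤ ∑ z ∈ A' - A' + E, (N z - 2 * u) :=
    ih A' (erase_ssubset hp₀) (fun B hB => hcard B (hB.trans (erase_subset _ _))) _ _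
      (fun p hp => sub_nonneg.2 (hmin p (mem_of_mem_erase hp)))
      (fun p hp p' hp' e he => by
        linarith [hN p (mem_of_mem_erase hp) p' (mem_of_mem_erase hp') e he])
  have hu : k * #A * u ≤ #(A - A + E) * u := by
    gcongr
    · exact hγ p₀ hp₀
    · exact_mod_cast hcard A subset_rfl
  calc 2 * k * ∑ p ∈ A, γ p = 2 * k * ∑ p ∈ A', (γ p - u) + 2 * (k * #A * u) := by
        rw [sum_erase A (f := fun p => γ p - u) (sub_self u), sum_sub_distrib, sum_const,
          nsmul_eq_mul]
        ring
    _ ≤ ∑ z ∈ A - A + E, (N z - 2 * u) + 2 * (#(A - A + E) * u) := by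
      gcongr ?_ + 2 * ?_
      refine ih'.trans (sum_le_sum_of_subset_of_nonneg ?_ fun z hz _ => ?_)
      · exact add_subset_add (sub_subset_sub (erase_subset _ _) (erase_subset _ _)) subset_rfl
      · linarith [hN_ge z hz]
    _ = ∑ z ∈ A - A + E, N z := by
      rw [sum_sub_distrib, sum_const, nsmul_eq_mul]
      ring

theorem Finset.four_mul_sum_le_sum_sub_add_zero_one {G : Type*} [AddGroup G] [DecidableEq G]
    (A : Finset (G × ℤ)) (γ N : G × ℤ → ℝ) (hγ : ∀ p ∈ A, 0 ≤ γ p)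
    (hN : ∀ p ∈ A, ∀ p' ∈ A, ∀ e ∈ ({0, (0, 1)} : Finset (G × ℤ)), γ p + γ p' ≤ N (p - p' + e)) :
    4 * ∑ p ∈ A, γ p ≤ ∑ z ∈ A - A + {0, (0, 1)}, N z := by
  convert two_mul_mul_sum_le_sum_sub_add 2 _ A
    (fun B _ => two_mul_card_le_card_sub_add_zero_one B) γ N hγ hN using 2
  norm_num

theorem Finset.snd_mem_Icc_of_mem_sub_add_zero_one {G : Type*} [AddGroup G] [DecidableEq G]
    {M : ℤ} {A : Finset (G × ℤ)} (hA : ∀ p ∈ A, p.2 ∈ Icc 1 M) {z : G × ℤ}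
    (hz : z ∈ A - A + {0, (0, 1)}) : z.2 ∈ Icc (-M) M := by
  obtain ⟨_, hd, e, he, rfl⟩ := mem_add.1 hz
  obtain ⟨p, hp, p', hp', rfl⟩ := mem_sub.1 hd
  have := mem_Icc.1 (hA p hp)
  have := mem_Icc.1 (hA p' hp')
  rw [mem_insert, mem_singleton] at he
  rcases he with rfl | rfl <;>
    simp only [Prod.snd_add, Prod.snd_sub, Prod.snd_zero, mem_Icc] <;> omega

theorem Finset.sum_le_sum_filter_lt_add {ι : Type*} (s : Finset ι) (f : ι → ℝ) {η : ℝ}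
    (hη : 0 ≤ η) : ∑ i ∈ s, f i ≤ ∑ i ∈ s with η < f i, f i + η * #s := by
  rw [← sum_filter_add_sum_filter_not s (η < f ·)]
  gcongr
  calc ∑ i ∈ s with ¬η < f i, f i ≤ #{i ∈ s | ¬η < f i} • η :=
        sum_le_card_nsmul _ _ _ fun i hi => not_lt.1 (mem_filter.1 hi).2
    _ ≤ η * #s := by
      rw [nsmul_eq_mul, mul_comm]
      gcongr
      exact filter_subset _ _

theorem stmt_11_general (q M : ℕ) [NeZero q] (η : ℝ) (hη : 0 < η)
    (α : ZMod q → ℤ → ℝ) :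
    4 * ∑ a : ZMod q, ∑ i ∈ Finset.Icc (1 : ℤ) M, α a i - 4 * η * q * M ≤
      ∑ x : ZMod q, ∑ y ∈ Finset.Icc (-(M : ℤ)) M,
        sSup (insert (0 : ℝ) {v : ℝ | ∃ a a' : ZMod q, ∃ i i' : ℤ,
          i ∈ Finset.Icc (1 : ℤ) (M : ℤ) ∧ i' ∈ Finset.Icc (1 : ℤ) (M : ℤ) ∧
          η < α a i ∧ η < α a' i' ∧ a - a' = x ∧ (i - i' = y ∨ i - i' = y - 1) ∧
          v = α a i + α a' i'}) := by
  set T : ZMod q → ℤ → Set ℝ := fun x y => {v : ℝ | ∃ a a' : ZMod q, ∃ i i' : ℤ,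
    i ∈ Finset.Icc (1 : ℤ) (M : ℤ) ∧ i' ∈ Finset.Icc (1 : ℤ) (M : ℤ) ∧
    η < α a i ∧ η < α a' i' ∧ a - a' = x ∧ (i - i' = y ∨ i - i' = y - 1) ∧
    v = α a i + α a' i'}
  set grid := (univ : Finset (ZMod q)) ×ˢ Icc (1 : ℤ) M
  set A := {p ∈ grid | η < α p.1 p.2}
  have hbdd (x : ZMod q) (y : ℤ) : BddAbove (insert 0 (T x y)) := by
    refine (((grid ×ˢ grid).image fun pp => α pp.1.1 pp.1.2 + α pp.2.1 pp.2.2).finite_toSet.subset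
      ?_).insert 0 |>.bddAbove
    rintro _ ⟨a, a', i, i', hi, hi', -, -, -, -, rfl⟩
    exact mem_coe.2 (mem_image.2 ⟨((a, i), (a', i')), by simp_all [grid], rfl⟩)
  have hpair : ∀ p ∈ A, ∀ p' ∈ A, ∀ e ∈ ({0, (0, 1)} : Finset (ZMod q × ℤ)),
      α p.1 p.2 + α p'.1 p'.2 ≤ sSup (insert 0 (T (p - p' + e).1 (p - p' + e).2)) := by
    simp only [A, grid, mem_filter, mem_product, mem_insert, mem_singleton]
    rintro p ⟨⟨-, hp⟩, hηp⟩ p' ⟨⟨-, hp'⟩, hηp'⟩ e he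
    refine le_csSup (hbdd _ _) (Set.mem_insert_of_mem _
      ⟨_, _, _, _, hp, hp', hηp, hηp', ?_, ?_, rfl⟩) <;> rcases he with rfl | rfl <;> simp
  have hD : A - A + {0, (0, 1)} ⊆ univ ×ˢ Icc (-(M : ℤ)) M := fun z hz =>
    mem_product.2 ⟨mem_univ _, snd_mem_Icc_of_mem_sub_add_zero_one
      (fun p hp => (mem_product.1 (mem_filter.1 hp).1).2) hz⟩
  calc 4 * ∑ a : ZMod q, ∑ i ∈ Icc (1 : ℤ) M, α a i - 4 * η * q * M
      = 4 * (∑ p ∈ grid, α p.1 p.2 - η * #grid) := by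
        rw [← sum_product (f := fun p => α p.1 p.2)]
        simp only [grid, card_product, card_univ, ZMod.card, Int.card_Icc, add_sub_cancel_right,
          Int.toNat_natCast, Nat.cast_mul]
        ring
    _ ≤ 4 * ∑ p ∈ A, α p.1 p.2 := by
        linarith [grid.sum_le_sum_filter_lt_add (fun p => α p.1 p.2) hη.le]
    _ ≤ ∑ z ∈ A - A + {0, (0, 1)}, sSup (insert 0 (T z.1 z.2)) :=
        four_mul_sum_le_sum_sub_add_zero_one A _ _
          (fun p hp => hη.le.trans (mem_filter.1 hp).2.le) hpair
    _ ≤ ∑ z ∈ univ ×ˢ Icc (-(M : ℤ)) M, sSup (insert 0 (T z.1 z.2)) :=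
        sum_le_sum_of_subset_of_nonneg hD fun z _ _ => le_csSup (hbdd _ _) (Set.mem_insert 0 _)
    _ = _ := sum_product _ _ _

/-- Robust Brunn–Minkowski-type inequality: thresholding at level `η`, one has
`Σ α̃ ≥ 4 Σ α − 4ηqM`. -/
theorem stmt_11 (q M : ℕ) [NeZero q] (hM : 1 ≤ M) (η : ℝ) (hη : 0 < η)
    (α : ZMod q → ℤ → ℝ) (hα : ∀ a i, α a i ∈ Set.Icc (0 : ℝ) 1) :
    4 * ∑ a : ZMod q, ∑ i ∈ Finset.Icc (1 : ℤ) M, α a i - 4 * η * q * M ≤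
      ∑ x : ZMod q, ∑ y ∈ Finset.Icc (-(M : ℤ)) M,
        sSup (insert (0 : ℝ) {v : ℝ | ∃ a a' : ZMod q, ∃ i i' : ℤ,
          i ∈ Finset.Icc (1 : ℤ) (M : ℤ) ∧ i' ∈ Finset.Icc (1 : ℤ) (M : ℤ) ∧
          η < α a i ∧ η < α a' i' ∧ a - a' = x ∧ (i - i' = y ∨ i - i' = y - 1) ∧
          v = α a i + α a' i'}) :=
  stmt_11_general q M η hη α
end

section
/- Let ε, η > 0 and q ∈ ℕ, and let μ be the product of the uniform probability measure on ℤ/qℤ and Lebesgue measure on [0,1]. Suppose A ⊆ ℤ/qℤ × [0,1] is an open set with μ(A) ≥ 1/3 + ε, and let δ > 0. If μ(D_δ(A)) > 4μ(A) − ε, where D_δ(A) = {x : (1_A∗1_{−A})(x) ≥ δ} and 1_A∗1_{−A}(x) = μ(A ∩ (A + x)), then T(A) ≥ 2εδ, where T(A) = ∬ 1_A(x)1_A(x')1_A(x+x') dμ(x)dμ(x'). -/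
/-! `D_δ(A)` is symmetric, since `μ(A ∩ (A + x)) = μ(A ∩ (A - x))`, and lies in `A - A`, whose second
coordinate is at most `1`; so its part `D₊` with nonnegative second coordinate lies in
`ℤ/qℤ × [0,1]` and carries at least half its measure, more than `2μ(A) - ε/2`. As `A` and `D₊`
both live in a set of measure `1`, they overlap in measure more than `3μ(A) - ε/2 - 1 ≥ 2ε`, and
every `x ∈ A ∩ D₊` contributes `1_A(x) μ(A ∩ (A - x)) ≥ δ` to `T(A)`. -/

open MeasureTheory

/-- The measure on `ℤ/qℤ × ℝ`: the product of the uniform probability measure on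
`ℤ/qℤ` and Lebesgue measure. -/
noncomputable def muZR (q : ℕ) : Measure (ZMod q × ℝ) :=
  (((q : ENNReal))⁻¹ • Measure.count).prod volume

/-- `A` is an open subset of `ℤ/qℤ × [0,1]` (in the subspace topology). -/
def IsOpenBox (q : ℕ) (A : Set (ZMod q × ℝ)) : Prop :=
  A ⊆ Set.univ ×ˢ Set.Icc (0 : ℝ) 1 ∧
    ∃ U : Set (ZMod q × ℝ), IsOpen U ∧ A = U ∩ Set.univ ×ˢ Set.Icc (0 : ℝ) 1

/-- `T(A) = ∬ 1_A(x) 1_A(x') 1_A(x+x') dμ(x) dμ(x')`. -/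
noncomputable def Tcount (q : ℕ) (A : Set (ZMod q × ℝ)) : ℝ :=
  ∫ x, ∫ y, A.indicator (fun _ => (1 : ℝ)) x * A.indicator (fun _ => (1 : ℝ)) y *
    A.indicator (fun _ => (1 : ℝ)) (x + y) ∂(muZR q) ∂(muZR q)

open Set
open scoped Pointwise

namespace MeasureTheory.Measure

instance isNegInvariant_smul {G : Type*} [MeasurableSpace G] [InvolutiveNeg G] [MeasurableNeg G]
    (μ : Measure G) [μ.IsNegInvariant] (c : ENNReal) : (c • μ).IsNegInvariant :=
  ⟨by rw [Measure.neg, Measure.map_smul, ← Measure.neg, μ.neg_eq_self]⟩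

instance prod.isNegInvariant {G H : Type*} [MeasurableSpace G] [MeasurableSpace H]
    [InvolutiveNeg G] [InvolutiveNeg H] [MeasurableNeg G] [MeasurableNeg H]
    (μ : Measure G) (ν : Measure H) [SFinite μ] [SFinite ν] [μ.IsNegInvariant] [ν.IsNegInvariant] :
    (μ.prod ν).IsNegInvariant :=
  ⟨by rw [Measure.neg, show (Neg.neg : G × H → G × H) = Prod.map Neg.neg Neg.neg from rfl,
    ← Measure.map_prod_map _ _ measurable_neg measurable_neg, ← Measure.neg, ← Measure.neg,
    μ.neg_eq_self, ν.neg_eq_self]⟩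

end MeasureTheory.Measure

theorem measureReal_le_two_mul_measureReal_inter {G : Type*} [MeasurableSpace G] [InvolutiveNeg G]
    [MeasurableNeg G] (μ : Measure G) [μ.IsNegInvariant] {D P : Set G} (hD : ∀ x ∈ D, -x ∈ D)
    (hDP : D ⊆ P ∪ -P) (hfin : μ (D ∩ P) ≠ ⊤) : μ.real D ≤ 2 * μ.real (D ∩ P) := by
  have hcover : D ⊆ D ∩ P ∪ -(D ∩ P) := fun x hx ↦ by
    rcases hDP hx with hP | hP
    · exact Or.inl ⟨hx, hP⟩
    · exact Or.inr ⟨hD x hx, hP⟩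
  calc μ.real D ≤ μ.real (D ∩ P ∪ -(D ∩ P)) :=
        measureReal_mono hcover (measure_union_ne_top hfin (by rwa [Measure.measure_neg]))
    _ ≤ μ.real (D ∩ P) + μ.real (-(D ∩ P)) := measureReal_union_le _ _
    _ = 2 * μ.real (D ∩ P) := by simp only [measureReal_def, Measure.measure_neg]; ring

section AddCommGroup

variable {G : Type*} [MeasurableSpace G] [AddCommGroup G] (μ : Measure G) (A : Set G)

/-- The paper's `(1_A ∗ 1_{-A})(x) = μ(A ∩ (A + x))`. -/
noncomputable def autocorr (x : G) : ENNReal := μ {y | y ∈ A ∧ y - x ∈ A}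

/-- The paper's `T(A)`, the density of Schur triples `x, y, x + y` in `A`. -/
noncomputable def schurDensity : ℝ :=
  ∫ x, ∫ y, A.indicator (fun _ => (1 : ℝ)) x * A.indicator (fun _ => (1 : ℝ)) y *
    A.indicator (fun _ => (1 : ℝ)) (x + y) ∂μ ∂μ

variable {μ A}

theorem autocorr_eq_measure_add_mem [MeasurableAdd G] [μ.IsAddRightInvariant] (x : G) :
    autocorr μ A x = μ {y | y ∈ A ∧ x + y ∈ A} := by
  calc autocorr μ A x = μ ((· + x) ⁻¹' {y | y ∈ A ∧ y - x ∈ A}) :=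
        (measure_preimage_add_right μ x _).symm
    _ = μ {y | y ∈ A ∧ x + y ∈ A} := by
        congr 1
        ext y
        simp [add_comm x y, and_comm]

theorem autocorr_neg [MeasurableAdd G] [μ.IsAddRightInvariant] (x : G) :
    autocorr μ A (-x) = autocorr μ A x := by
  rw [autocorr_eq_measure_add_mem x, autocorr]
  simp only [sub_neg_eq_add, add_comm]

theorem mem_sub_of_autocorr_ne_zero {x : G} (hx : autocorr μ A x ≠ 0) : x ∈ A - A := by
  obtain ⟨y, hyA, hyxA⟩ := nonempty_of_measure_ne_zero hx
  exact ⟨y, hyA, y - x, hyxA, sub_sub_cancel y x⟩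

theorem schurDensity_eq_integral_indicator [MeasurableAdd G] (hA : MeasurableSet A) :
    schurDensity μ A = ∫ x, A.indicator (fun x ↦ μ.real {y | y ∈ A ∧ x + y ∈ A}) x ∂μ := by
  refine integral_congr_ae (.of_forall fun x ↦ ?_)
  by_cases hx : x ∈ A
  · have hpt : ∀ y, A.indicator (fun _ ↦ (1 : ℝ)) y * A.indicator (fun _ ↦ (1 : ℝ)) (x + y) =
        {y | y ∈ A ∧ x + y ∈ A}.indicator (fun _ ↦ 1) y := fun y ↦ by
      by_cases hy : y ∈ A <;> by_cases hxy : x + y ∈ A <;> simp [hy, hxy]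
    simp only [indicator_of_mem hx, one_mul, hpt]
    rw [integral_indicator_const (1 : ℝ) (s := {y | y ∈ A ∧ x + y ∈ A})
      (hA.inter (measurable_const_add x hA)), smul_eq_mul, mul_one]
  · simp [hx]

theorem integrable_indicator_measureReal_add_mem [MeasurableAdd₂ G] [SFinite μ]
    (hA : MeasurableSet A) (hAfin : μ A ≠ ⊤) :
    Integrable (A.indicator fun x ↦ μ.real {y | y ∈ A ∧ x + y ∈ A}) μ := by
  have hmeas : Measurable fun x ↦ μ.real {y | y ∈ A ∧ x + y ∈ A} :=
    (measurable_measure_prodMk_left ((measurable_snd hA).inter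
      ((measurable_fst.add measurable_snd) hA))).ennreal_toReal
  refine (integrable_indicator_iff hA).2 (Measure.integrableOn_of_bounded hAfin
    hmeas.aestronglyMeasurable (M := μ.real A) (.of_forall fun x ↦ ?_))
  rw [Real.norm_of_nonneg measureReal_nonneg]
  exact measureReal_mono (fun y hy ↦ hy.1) hAfin

theorem mul_measureReal_le_schurDensity [MeasurableAdd₂ G] [SFinite μ] [μ.IsAddRightInvariant]
    (hA : MeasurableSet A) (hAfin : μ A ≠ ⊤) {δ : ℝ} (hδ : 0 < δ) {S : Set G}
    (hS : ∀ x ∈ S, δ ≤ (autocorr μ A x).toReal) : δ * μ.real (A ∩ S) ≤ schurDensity μ A := by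
  set f := A.indicator fun x ↦ μ.real {y | y ∈ A ∧ x + y ∈ A}
  have hsub : A ∩ S ⊆ {x | δ ≤ f x} := fun x ⟨hxA, hxS⟩ ↦ by
    simpa [f, indicator_of_mem hxA, ← autocorr_eq_measure_add_mem, measureReal_def] using hS x hxS
  have hsupp : {x | δ ≤ f x} ⊆ A := fun x hx ↦ by
    by_contra hxA
    exact (hδ.trans_le hx).ne' (indicator_of_notMem hxA _)
  calc δ * μ.real (A ∩ S) ≤ δ * μ.real {x | δ ≤ f x} :=
        mul_le_mul_of_nonneg_left (measureReal_mono hsub (measure_ne_top_of_subset hsupp hAfin))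
          hδ.le
    _ ≤ ∫ x, f x ∂μ := mul_meas_ge_le_integral_of_nonneg
        (.of_forall fun x ↦ indicator_nonneg (fun _ _ ↦ measureReal_nonneg) x)
        (integrable_indicator_measureReal_add_mem hA hAfin) δ
    _ = schurDensity μ A := (schurDensity_eq_integral_indicator hA).symm

end AddCommGroup

section muZR

variable (q : ℕ) [NeZero q]

instance : SFinite (muZR q) := by unfold muZR; infer_instance

instance : (muZR q).IsAddLeftInvariant := by unfold muZR; infer_instance

instance : (muZR q).IsNegInvariant := by unfold muZR; infer_instance

theorem muZR_univ_prod (s : Set ℝ) : muZR q (univ ×ˢ s) = volume s := by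
  rw [muZR, Measure.prod_prod, Measure.smul_apply, Measure.count_univ, smul_eq_mul]
  simp [ENNReal.inv_mul_cancel (Nat.cast_ne_zero.2 (NeZero.ne q)) (ENNReal.natCast_ne_top q)]

end muZR

theorem IsOpenBox.measurableSet {q : ℕ} {A : Set (ZMod q × ℝ)} (hA : IsOpenBox q A) :
    MeasurableSet A := by
  obtain ⟨-, U, hU, rfl⟩ := hA
  exact hU.measurableSet.inter (MeasurableSet.univ.prod measurableSet_Icc)

theorem stmt_18_general (ε δ : ℝ) (hε : 0 < ε) (hδ : 0 < δ)
    (q : ℕ) (hq : 0 < q) (A : Set (ZMod q × ℝ)) (hA : IsOpenBox q A)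
    (hmes : 1 / 3 + ε ≤ (muZR q A).toReal)
    (hD : 4 * (muZR q A).toReal - ε <
      (muZR q {x : ZMod q × ℝ | δ ≤ (muZR q {y | y ∈ A ∧ y - x ∈ A}).toReal}).toReal) :
    2 * ε * δ ≤ Tcount q A := by
  have : NeZero q := ⟨hq.ne'⟩
  set μ := muZR q
  set box : Set (ZMod q × ℝ) := univ ×ˢ Icc 0 1
  set D := {x | δ ≤ (autocorr μ A x).toReal}
  set Dpos := D ∩ {x | 0 ≤ x.2}
  have hbox_fin : μ box ≠ ⊤ := by simp [μ, box, muZR_univ_prod]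
  have hbox : μ.real box = 1 := by simp [μ, box, measureReal_def, muZR_univ_prod]
  have hAfin : μ A ≠ ⊤ := measure_ne_top_of_subset hA.1 hbox_fin
  have hDpos_box : Dpos ⊆ box := by
    rintro x ⟨hxD, hx0⟩
    have hne : autocorr μ A x ≠ 0 := fun h ↦ by
      have : δ ≤ 0 := by simpa [D, h] using hxD
      linarith
    obtain ⟨a, ha, b, hb, rfl⟩ := mem_sub_of_autocorr_ne_zero hne
    exact ⟨trivial, hx0, by linarith [(hA.1 ha).2.2, (hA.1 hb).2.1, Prod.snd_sub a b]⟩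
  have hDpos_fin : μ Dpos ≠ ⊤ := measure_ne_top_of_subset hDpos_box hbox_fin
  have hhalf : μ.real D ≤ 2 * μ.real Dpos :=
    measureReal_le_two_mul_measureReal_inter μ (fun x hx ↦ by simpa [D, autocorr_neg] using hx)
      (fun x _ ↦ by rcases le_total 0 x.2 with h | h <;> simp [h])
      hDpos_fin
  have hpigeon : μ.real Dpos + μ.real A ≤ 1 + μ.real (A ∩ Dpos) := by
    rw [← measureReal_union_add_inter hA.measurableSet hDpos_fin, inter_comm, ← hbox]
    gcongr
    exact union_subset hDpos_box hA.1
  have hlarge : 2 * ε ≤ μ.real (A ∩ Dpos) := by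
    change 4 * μ.real A - ε < μ.real D at hD
    change 1 / 3 + ε ≤ μ.real A at hmes
    linarith
  calc 2 * ε * δ ≤ δ * μ.real (A ∩ Dpos) := by nlinarith
    _ ≤ Tcount q A := mul_measureReal_le_schurDensity hA.measurableSet hAfin hδ fun x hx ↦ hx.1

/-- If `A ⊆ ℤ/qℤ × [0,1]` is open with `μ(A) ≥ 1/3 + ε` and
`μ(D_δ(A)) > 4μ(A) − ε`, then `T(A) ≥ 2εδ`. -/
theorem stmt_18 (ε η δ : ℝ) (hε : 0 < ε) (hη : 0 < η) (hδ : 0 < δ)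
    (q : ℕ) (hq : 0 < q) (A : Set (ZMod q × ℝ)) (hA : IsOpenBox q A)
    (hmes : 1 / 3 + ε ≤ (muZR q A).toReal)
    (hD : 4 * (muZR q A).toReal - ε <
      (muZR q {x : ZMod q × ℝ | δ ≤ (muZR q {y | y ∈ A ∧ y - x ∈ A}).toReal}).toReal) :
    2 * ε * δ ≤ Tcount q A :=
  stmt_18_general ε δ hε hδ q hq A hA hmes hD
end

section
/- Let G = ℤ/N'ℤ be a cyclic group of prime order with N' ∈ [4N, 8N], let f : G → ℂ be any function, and let P ⊆ {1,…,N} ⊆ G be an arithmetic progression with |P| ≥ ηN. Then |E_{n∈P} f(n)| ≤ C·η^{-1}·‖f‖_{U²(G)} for an absolute constant C, where ‖f‖_{U²(G)}⁴ = E_{x,h₁,h₂∈G} f(x) \overline{f(x+h₁)} \overline{f(x+h₂)} f(x+h₁+h₂). -/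
/-!
Let `Q ⊆ ZMod N'` be the image of `P`. Parseval and Hölder with exponents `(4, 4/3)` give
`|∑_{x ∈ Q} f x| ≤ N'⁻¹ ‖f̂‖₄ ‖1̂_Q‖_{4/3}`, and `‖f̂‖₄ = N' ‖f‖_{U²}` since `∑ |f̂|⁴` is `N'` times
the Gowers sum (the Fourier transform of the correlation `∑ₜ f t f̄(t - h)` is `|f̂|²`).
The Fourier coefficient of a progression with difference `d` at `r` is a geometric sum of ratio
`e(-dr)`, of size at most `N' / (2 |dr|)` where `|s|` is the distance from `s` to `0`; as `r ↦ dr`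
permutes `ZMod N'` for `d ≠ 0`, `∑_r |1̂_Q(r)|^{4/3} ≪ N'^{4/3} ∑_k k^{-4/3} ≪ N'^{4/3}`.
Hence `|E_{n ∈ P} f n| ≪ (N' / |P|) ‖f‖_{U²} ≤ 8 η⁻¹ ‖f‖_{U²}`.
-/

open Finset Real
open scoped ComplexConjugate

theorem exists_range_image_eq_and_injOn_add_nsmul {G : Type*} [AddGroup G] [Finite G]
    [DecidableEq G] (a d : G) (L : ℕ) :
    ∃ L' : ℕ, (range L').image (fun i => a + i • d) = (range L).image (fun i => a + i • d) ∧
      Set.InjOn (fun i : ℕ => a + i • d) (range L') := by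
  have hn := addOrderOf_pos d
  refine ⟨min L (addOrderOf d), ?_, fun i hi j hj hij => ?_⟩
  · refine (image_subset_image (range_subset_range.2 (min_le_left _ _))).antisymm ?_
    intro x hx
    obtain ⟨i, hi, rfl⟩ := mem_image.1 hx
    refine mem_image.2 ⟨i % addOrderOf d, ?_, by rw [mod_addOrderOf_nsmul]⟩
    simp only [mem_range, lt_min_iff] at hi ⊢
    exact ⟨(i.mod_le _).trans_lt hi, i.mod_lt hn⟩
  · simp only [coe_range, Set.mem_Iio, lt_min_iff] at hi hj
    exact nsmul_injOn_Iio_addOrderOf hi.2 hj.2 (add_left_cancel hij)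

lemma norm_geom_sum_le {z : ℂ} (hz : ‖z‖ = 1) (hz1 : z ≠ 1) (L : ℕ) :
    ‖∑ i ∈ range L, z ^ i‖ ≤ 2 / ‖z - 1‖ := by
  rw [geom_sum_eq hz1, norm_div]
  gcongr
  calc ‖z ^ L - 1‖ ≤ ‖z ^ L‖ + ‖(1 : ℂ)‖ := norm_sub_le _ _
    _ = 2 := by rw [norm_pow, hz, one_pow, norm_one, one_add_one_eq_two]

namespace ZMod

theorem injOn_intCast_Ico {M : ℕ} (a : ℤ) :
    Set.InjOn (Int.cast : ℤ → ZMod M) (Set.Ico a (a + M)) := by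
  intro x hx y hy hxy
  have hdvd := (intCast_eq_intCast_iff_dvd_sub x y M).1 hxy
  have := Int.eq_zero_of_abs_lt_dvd hdvd
    (abs_sub_lt_iff.2 ⟨by linarith [hx.1, hy.2], by linarith [hx.2, hy.1]⟩)
  linarith

theorem sum_intCast_progression {M N : ℕ} (hN : N ≤ M) (f : ZMod M → ℂ) {P : Finset ℤ} {a d : ℤ}
    {L : ℕ} (hP : P = (range L).image (fun i : ℕ => a + (i : ℤ) * d)) (hPN : P ⊆ Icc 1 (N : ℤ)) :
    ∑ n ∈ P, f n = ∑ x ∈ (range L).image (fun i => (a : ZMod M) + i • (d : ZMod M)), f x := by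
  have hinj : Set.InjOn (Int.cast : ℤ → ZMod M) P := fun x hx y hy =>
    injOn_intCast_Ico 1 (by have := mem_Icc.1 (hPN hx); constructor <;> omega)
      (by have := mem_Icc.1 (hPN hy); constructor <;> omega)
  rw [← sum_image hinj, hP, image_image]
  congr 2
  funext i
  simp

variable {M : ℕ} [NeZero M]

lemma sum_stdAddChar_mul_eq_ite (b : ZMod M) :
    ∑ x : ZMod M, stdAddChar (x * b) = if b = 0 then (M : ℂ) else 0 := by
  simpa only [ZMod.card, Nat.cast_ite, Nat.cast_zero] using
    AddChar.sum_mulShift b (isPrimitive_stdAddChar M)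

lemma dft_mul_conj_dft (f g : ZMod M → ℂ) (r : ZMod M) :
    𝓕 f r * conj (𝓕 g r) = ∑ x, ∑ y, stdAddChar (r * (y - x)) * (f x * conj (g y)) := by
  simp only [dft_apply, smul_eq_mul, map_sum, map_mul, ← AddChar.map_neg_eq_conj, neg_neg,
    sum_mul_sum]
  refine sum_congr rfl fun x _ => sum_congr rfl fun y _ => ?_
  rw [show r * (y - x) = -(x * r) + y * r by ring, AddChar.map_add_eq_mul]
  ring

theorem sum_dft_mul_conj_dft (f g : ZMod M → ℂ) :
    ∑ r, 𝓕 f r * conj (𝓕 g r) = M * ∑ x, f x * conj (g x) := by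
  calc ∑ r, 𝓕 f r * conj (𝓕 g r)
      = ∑ x, ∑ y, (∑ r, stdAddChar (r * (y - x))) * (f x * conj (g y)) := by
        simp only [dft_mul_conj_dft, sum_mul]
        rw [sum_comm]
        exact sum_congr rfl fun x _ => sum_comm
    _ = M * ∑ x, f x * conj (g x) := by
        simp [sum_stdAddChar_mul_eq_ite, sub_eq_zero, mul_sum]

lemma dft_correlation (f : ZMod M → ℂ) (r : ZMod M) :
    𝓕 (fun h => ∑ t, f t * conj (f (t - h))) r = 𝓕 f r * conj (𝓕 f r) := by
  rw [dft_mul_conj_dft, dft_apply]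
  simp only [smul_eq_mul, mul_sum]
  rw [sum_comm]
  refine sum_congr rfl fun t _ => Fintype.sum_equiv (Equiv.subLeft t) _ _ fun h => ?_
  rw [Equiv.subLeft_apply, show r * (t - h - t) = -(h * r) by ring]

lemma sum_gowers_eq_sum_correlation_mul_conj (f : ZMod M → ℂ) :
    ∑ x, ∑ h₁, ∑ h₂, f x * conj (f (x + h₁)) * conj (f (x + h₂)) * f (x + h₁ + h₂) =
      ∑ h, (∑ t, f t * conj (f (t - h))) * conj (∑ t, f t * conj (f (t - h))) := by
  simp only [map_sum, map_mul, Complex.conj_conj, sum_mul_sum]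
  calc _ = ∑ h, ∑ x, ∑ h₁, f x * conj (f (x + h₁)) * conj (f (x + h)) * f (x + h₁ + h) :=
        (sum_congr rfl fun x _ => sum_comm).trans sum_comm
    _ = ∑ h, ∑ u, ∑ t, f t * conj (f (t - h)) * (conj (f u) * f (u - h)) := by
        refine sum_congr rfl fun h _ => Fintype.sum_equiv (Equiv.addRight h) _ _ fun x => ?_
        refine Fintype.sum_equiv (Equiv.addLeft (x + h)) _ _ fun h₁ => ?_
        simp only [Equiv.coe_addRight, Equiv.coe_addLeft, add_sub_cancel_right]
        rw [show x + h + h₁ - h = x + h₁ by abel, show x + h₁ + h = x + h + h₁ by abel]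
        ring
    _ = _ := sum_congr rfl fun h _ => sum_comm

noncomputable def gowersU2Norm (f : ZMod M → ℂ) : ℝ :=
  ‖(1 / (M : ℂ) ^ 3) * ∑ x, ∑ h₁, ∑ h₂,
      f x * conj (f (x + h₁)) * conj (f (x + h₂)) * f (x + h₁ + h₂)‖ ^ (1 / 4 : ℝ)

lemma card_mul_sum_gowers_eq_sum_norm_dft_pow_four (f : ZMod M → ℂ) :
    M * ∑ x, ∑ h₁, ∑ h₂, f x * conj (f (x + h₁)) * conj (f (x + h₂)) * f (x + h₁ + h₂) =
      ((∑ r, ‖𝓕 f r‖ ^ 4 : ℝ) : ℂ) := by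
  have hpow (r : ZMod M) : ((‖𝓕 f r‖ ^ 4 : ℝ) : ℂ) =
      𝓕 (fun h => ∑ t, f t * conj (f (t - h))) r *
        conj (𝓕 (fun h => ∑ t, f t * conj (f (t - h))) r) := by
    rw [dft_correlation, Complex.mul_conj', norm_mul, Complex.norm_conj]
    push_cast
    ring
  rw [sum_gowers_eq_sum_correlation_mul_conj, ← sum_dft_mul_conj_dft, Complex.ofReal_sum]
  exact (sum_congr rfl fun r _ => hpow r).symm

lemma gowersU2Norm_nonneg (f : ZMod M → ℂ) : 0 ≤ gowersU2Norm f := by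
  unfold gowersU2Norm
  positivity

theorem gowersU2Norm_eq (f : ZMod M → ℂ) :
    gowersU2Norm f = (∑ r, ‖𝓕 f r‖ ^ 4) ^ (1 / 4 : ℝ) / M := by
  have hM : (0 : ℝ) < M := Nat.cast_pos.2 (NeZero.pos M)
  have hA : 0 ≤ ∑ r, ‖𝓕 f r‖ ^ 4 := by positivity
  rw [gowersU2Norm, one_div_mul_eq_div,
    ← mul_div_mul_left _ _ (Nat.cast_ne_zero.2 (NeZero.ne M)),
    card_mul_sum_gowers_eq_sum_norm_dft_pow_four, norm_div, Complex.norm_real,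
    Real.norm_of_nonneg hA, ← pow_succ', norm_pow, Complex.norm_natCast,
    Real.div_rpow hA (by positivity), ← Real.rpow_natCast, ← Real.rpow_mul hM.le]
  norm_num

theorem norm_sum_mul_conj_le {p q : ℝ} (hpq : p.HolderConjugate q) (f g : ZMod M → ℂ) :
    ‖∑ x, f x * conj (g x)‖ ≤
      (∑ r, ‖𝓕 f r‖ ^ p) ^ (1 / p) * (∑ r, ‖𝓕 g r‖ ^ q) ^ (1 / q) / M := by
  have hM : (0 : ℝ) < M := Nat.cast_pos.2 (NeZero.pos M)
  rw [le_div_iff₀ hM, mul_comm, ← Complex.norm_natCast, ← norm_mul, ← sum_dft_mul_conj_dft]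
  calc ‖∑ r, 𝓕 f r * conj (𝓕 g r)‖ ≤ ∑ r, ‖𝓕 f r‖ * ‖𝓕 g r‖ := by
        refine (norm_sum_le _ _).trans_eq (sum_congr rfl fun r _ => ?_)
        rw [norm_mul, Complex.norm_conj]
    _ ≤ _ := Real.inner_le_Lp_mul_Lq_of_nonneg univ hpq (fun _ _ => norm_nonneg _)
        (fun _ _ => norm_nonneg _)

theorem le_norm_stdAddChar_sub_one (s : ZMod M) :
    4 * s.valMinAbs.natAbs / M ≤ ‖stdAddChar s - 1‖ := by
  have hM : (0 : ℝ) < M := Nat.cast_pos.2 (NeZero.pos M)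
  set y : ℝ := π * s.valMinAbs / M
  have hexp : stdAddChar s = Complex.exp (Complex.I * (2 * y : ℝ)) := by
    rw [← coe_valMinAbs s, stdAddChar_coe]
    congr 1
    push_cast [y]
    ring
  have hy : |y| = π * s.valMinAbs.natAbs / M := by
    rw [abs_div, abs_mul, abs_of_pos pi_pos, abs_of_pos hM, Nat.cast_natAbs, Int.cast_abs]
  have hy_le : |y| ≤ π / 2 := by
    have h2 : (s.valMinAbs.natAbs * 2 : ℝ) ≤ M := by
      exact_mod_cast (Nat.le_div_iff_mul_le two_pos).1 (natAbs_valMinAbs_le s)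
    rw [hy, div_le_div_iff₀ hM two_pos]
    nlinarith [pi_pos]
  rw [hexp, Complex.norm_exp_I_mul_ofReal_sub_one, mul_div_cancel_left₀ _ two_ne_zero, norm_mul,
    Real.norm_two, Real.norm_eq_abs, abs_sin_eq_sin_abs_of_abs_le_pi (by linarith [pi_pos])]
  calc 4 * (s.valMinAbs.natAbs : ℝ) / M = 2 * (2 / π * |y|) := by
        rw [hy]; field_simp; ring
    _ ≤ 2 * sin |y| := by gcongr; exact mul_le_sin (abs_nonneg y) hy_le

theorem norm_sum_range_stdAddChar_le {s : ZMod M} (hs : s ≠ 0) (a : ZMod M) (L : ℕ) :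
    ‖∑ i ∈ range L, stdAddChar (a + i • s)‖ ≤ M / (2 * s.valMinAbs.natAbs) := by
  have hw : (0 : ℝ) < s.valMinAbs.natAbs := by
    simpa only [Nat.cast_pos, Int.natAbs_pos, Ne, valMinAbs_eq_zero] using hs
  have he : stdAddChar s ≠ 1 := by
    rw [← AddChar.map_zero_eq_one (stdAddChar (N := M))]
    exact (injective_stdAddChar (N := M)).ne hs
  simp only [AddChar.map_add_eq_mul, AddChar.map_nsmul_eq_pow, ← mul_sum, norm_mul,
    AddChar.norm_apply, one_mul]
  calc _ ≤ 2 / ‖stdAddChar s - 1‖ := norm_geom_sum_le (AddChar.norm_apply _ _) he L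
    _ ≤ 2 / (4 * s.valMinAbs.natAbs / M) := by
        gcongr
        · exact div_pos (mul_pos four_pos hw) (Nat.cast_pos.2 (NeZero.pos M))
        · exact le_norm_stdAddChar_sub_one s
    _ = M / (2 * s.valMinAbs.natAbs) := by field_simp; ring

theorem sum_natAbs_valMinAbs_rpow_neg_le {p : ℝ} (hp : 1 < p) :
    ∑ s : ZMod M, (s.valMinAbs.natAbs : ℝ) ^ (-p) ≤ 2 * ∑' k : ℕ, (k : ℝ) ^ (-p) := by
  have hmin (s : ZMod M) : s.valMinAbs.natAbs = min s.val (-s).val := by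
    rw [valMinAbs_natAbs_eq_min, neg_val]
    split_ifs with h <;> simp [h]
  have hval : ∑ s : ZMod M, (s.val : ℝ) ^ (-p) ≤ ∑' k : ℕ, (k : ℝ) ^ (-p) := by
    rw [← tsum_fintype (L := .unconditional _)]
    exact tsum_comp_le_tsum_of_inj (Real.summable_nat_rpow.2 (by linarith))
      (fun k => rpow_nonneg k.cast_nonneg _) (val_injective M)
  calc ∑ s : ZMod M, (s.valMinAbs.natAbs : ℝ) ^ (-p)
      ≤ ∑ s : ZMod M, ((s.val : ℝ) ^ (-p) + ((-s).val : ℝ) ^ (-p)) := by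
        refine sum_le_sum fun s _ => ?_
        rw [hmin]
        rcases min_choice s.val (-s).val with h | h <;> rw [h]
        · exact le_add_of_nonneg_right (rpow_nonneg (Nat.cast_nonneg _) _)
        · exact le_add_of_nonneg_left (rpow_nonneg (Nat.cast_nonneg _) _)
    _ = 2 * ∑ s : ZMod M, (s.val : ℝ) ^ (-p) := by
        rw [sum_add_distrib, two_mul]
        exact congrArg _ (Fintype.sum_equiv (.neg _) _ _ fun _ => rfl)
    _ ≤ 2 * ∑' k : ℕ, (k : ℝ) ^ (-p) := by gcongr

lemma dft_indicator_apply (Q : Finset (ZMod M)) (r : ZMod M) :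
    𝓕 ((Q : Set (ZMod M)).indicator (1 : ZMod M → ℂ)) r = ∑ x ∈ Q, stdAddChar (-(x * r)) := by
  simp [dft_apply, Set.indicator_apply, sum_ite_mem]

lemma norm_dft_indicator_le_card (Q : Finset (ZMod M)) (r : ZMod M) :
    ‖𝓕 ((Q : Set (ZMod M)).indicator (1 : ZMod M → ℂ)) r‖ ≤ #Q := by
  rw [dft_indicator_apply]
  exact (norm_sum_le _ _).trans_eq (by simp)

theorem norm_dft_indicator_progression_le {a d : ZMod M} {L : ℕ}
    (hinj : Set.InjOn (fun i : ℕ => a + i • d) (range L)) {r : ZMod M} (hdr : d * r ≠ 0) :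
    ‖𝓕 ((((range L).image fun i => a + i • d : Finset (ZMod M)) : Set (ZMod M)).indicator
        (1 : ZMod M → ℂ)) r‖ ≤ M / (2 * (d * r).valMinAbs.natAbs) := by
  rw [dft_indicator_apply, sum_image hinj, ← natAbs_valMinAbs_neg]
  convert norm_sum_range_stdAddChar_le (neg_ne_zero.2 hdr) (-(a * r)) L using 4 with i
  ring

theorem norm_dft_indicator_progression_rpow_le [Fact M.Prime] {p : ℝ} (hp : 0 ≤ p)
    {a d : ZMod M} {L : ℕ} (hinj : Set.InjOn (fun i : ℕ => a + i • d) (range L)) (hd : d ≠ 0)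
    (r : ZMod M) :
    ‖𝓕 ((((range L).image fun i => a + i • d : Finset (ZMod M)) : Set (ZMod M)).indicator
        (1 : ZMod M → ℂ)) r‖ ^ p ≤
      M ^ p * ((if r = 0 then 1 else 0) + ((d * r).valMinAbs.natAbs : ℝ) ^ (-p)) := by
  by_cases hr : r = 0
  · set Q := (range L).image fun i => a + i • d
    have hF0 := (norm_dft_indicator_le_card Q r).trans
      (by exact_mod_cast (card_le_univ Q).trans_eq (ZMod.card M) : (#Q : ℝ) ≤ M)
    rw [if_pos hr]
    calc _ ≤ (M : ℝ) ^ p := rpow_le_rpow (norm_nonneg _) hF0 hp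
      _ ≤ M ^ p * (1 + ((d * r).valMinAbs.natAbs : ℝ) ^ (-p)) :=
        le_mul_of_one_le_right (by positivity)
          (le_add_of_nonneg_right (rpow_nonneg (Nat.cast_nonneg _) _))
  have hw : (0 : ℝ) < (d * r).valMinAbs.natAbs := by
    simpa only [Nat.cast_pos, Int.natAbs_pos, Ne, valMinAbs_eq_zero] using mul_ne_zero hd hr
  have hFr := (norm_dft_indicator_progression_le hinj (mul_ne_zero hd hr)).trans
    (div_le_div_of_nonneg_left (Nat.cast_nonneg _) hw (by linarith))
  rw [if_neg hr, zero_add]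
  calc _ ≤ ((M : ℝ) / (d * r).valMinAbs.natAbs) ^ p := rpow_le_rpow (norm_nonneg _) hFr hp
    _ = M ^ p * ((d * r).valMinAbs.natAbs : ℝ) ^ (-p) := by
        rw [div_rpow (Nat.cast_nonneg _) hw.le, rpow_neg hw.le, div_eq_mul_inv]

theorem sum_norm_dft_indicator_progression_rpow_le [Fact M.Prime] {p : ℝ} (hp : 1 < p)
    (a d : ZMod M) (L : ℕ) :
    ∑ r, ‖𝓕 ((((range L).image fun i => a + i • d : Finset (ZMod M)) : Set (ZMod M)).indicator
        (1 : ZMod M → ℂ)) r‖ ^ p ≤ (1 + 2 * ∑' k : ℕ, (k : ℝ) ^ (-p)) * M ^ p := by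
  obtain ⟨L, hQ, hinj⟩ := exists_range_image_eq_and_injOn_add_nsmul a d L
  rw [← hQ]
  set Q := (range L).image fun i => a + i • d
  set F := 𝓕 ((Q : Set (ZMod M)).indicator (1 : ZMod M → ℂ))
  have hcard : #Q = L := by rw [card_image_of_injOn hinj, card_range]
  have hM1 : (1 : ℝ) ≤ M := Nat.one_le_cast.2 (NeZero.pos M)
  have hS : 0 ≤ ∑' k : ℕ, (k : ℝ) ^ (-p) := tsum_nonneg fun k => rpow_nonneg k.cast_nonneg _
  by_cases hd : d = 0
  · have hL : L ≤ 1 := by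
      by_contra! hL
      exact zero_ne_one (hinj (mem_coe.2 (mem_range.2 (by omega)))
        (mem_coe.2 (mem_range.2 hL)) (by simp [hd]))
    calc ∑ r, ‖F r‖ ^ p ≤ ∑ r : ZMod M, (1 : ℝ) := by
          refine sum_le_sum fun r _ => rpow_le_one (norm_nonneg _) ?_ (by linarith)
          exact (norm_dft_indicator_le_card Q r).trans (by exact_mod_cast hcard ▸ hL)
      _ = M := by simp
      _ ≤ (1 + 2 * ∑' k : ℕ, (k : ℝ) ^ (-p)) * M ^ p :=
          (self_le_rpow_of_one_le hM1 hp.le).trans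
            (le_mul_of_one_le_left (by positivity) (by linarith))
  calc ∑ r, ‖F r‖ ^ p
      ≤ ∑ r, M ^ p * ((if r = 0 then 1 else 0) + ((d * r).valMinAbs.natAbs : ℝ) ^ (-p)) :=
        sum_le_sum fun r _ => norm_dft_indicator_progression_rpow_le (by linarith) hinj hd r
    _ = M ^ p * (1 + ∑ s : ZMod M, (s.valMinAbs.natAbs : ℝ) ^ (-p)) := by
        rw [← mul_sum, sum_add_distrib, sum_ite_eq', if_pos (mem_univ _)]
        exact congrArg (fun t : ℝ => (M : ℝ) ^ p * (1 + t))
          (Fintype.sum_equiv (Equiv.mulLeft₀ d hd) _ _ fun _ => rfl)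
    _ ≤ (1 + 2 * ∑' k : ℕ, (k : ℝ) ^ (-p)) * M ^ p := by
        rw [mul_comm]
        gcongr
        exact sum_natAbs_valMinAbs_rpow_neg_le hp

theorem norm_sum_progression_le_mul_gowersU2Norm [Fact M.Prime] (f : ZMod M → ℂ)
    (a d : ZMod M) (L : ℕ) :
    ‖∑ x ∈ (range L).image (fun i => a + i • d), f x‖ ≤
      (1 + 2 * ∑' k : ℕ, (k : ℝ) ^ (-(4 / 3) : ℝ)) ^ (3 / 4 : ℝ) * M * gowersU2Norm f := by
  set Q := (range L).image (fun i => a + i • d)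
  set K := 1 + 2 * ∑' k : ℕ, (k : ℝ) ^ (-(4 / 3) : ℝ)
  have hM : (0 : ℝ) < M := Nat.cast_pos.2 (NeZero.pos M)
  have hK : 0 ≤ K := by positivity
  have hsum : ∑ x ∈ Q, f x = ∑ x, f x * conj ((Q : Set (ZMod M)).indicator 1 x) := by
    simp [Set.indicator_apply, sum_ite_mem]
  have hf : (∑ r, ‖𝓕 f r‖ ^ (4 : ℝ)) ^ (1 / 4 : ℝ) = M * gowersU2Norm f := by
    rw [gowersU2Norm_eq, mul_div_cancel₀ _ hM.ne']
    norm_cast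
  set B := (∑ r, ‖𝓕 ((Q : Set (ZMod M)).indicator (1 : ZMod M → ℂ)) r‖ ^ (4 / 3 : ℝ)) ^
    (1 / (4 / 3) : ℝ)
  have hQ : B ≤ K ^ (3 / 4 : ℝ) * M := by
    calc B ≤ (K * M ^ (4 / 3 : ℝ)) ^ (3 / 4 : ℝ) := by
          simp only [B, show (1 / (4 / 3) : ℝ) = 3 / 4 by norm_num]
          exact rpow_le_rpow (by positivity) (sum_norm_dft_indicator_progression_rpow_le
            (p := 4 / 3) (by norm_num) a d L) (by norm_num)
      _ = K ^ (3 / 4 : ℝ) * M := by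
          rw [mul_rpow hK (by positivity), ← rpow_mul hM.le]
          norm_num
  have hpq : Real.HolderConjugate 4 (4 / 3) := ⟨by norm_num, by norm_num, by norm_num⟩
  rw [hsum]
  refine (norm_sum_mul_conj_le hpq f _).trans ?_
  rw [hf]
  calc M * gowersU2Norm f * B / M ≤ M * gowersU2Norm f * (K ^ (3 / 4 : ℝ) * M) / M := by
        have := gowersU2Norm_nonneg f
        gcongr
    _ = K ^ (3 / 4 : ℝ) * M * gowersU2Norm f := by field_simp

end ZMod

open ZMod in
/-- If `G = ℤ/N'ℤ` with `N'` prime, `N' ∈ [4N, 8N]`, and `P ⊆ {1,…,N}` is an arithmetic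
progression with `|P| ≥ ηN`, then `|E_{n∈P} f(n)| ≤ C η⁻¹ ‖f‖_{U²(G)}` for an absolute
constant `C`. -/
theorem stmt_19 : ∃ C : ℝ, 0 < C ∧ ∀ (N N' : ℕ) [NeZero N'], 1 ≤ N → N'.Prime →
    4 * N ≤ N' → N' ≤ 8 * N →
    ∀ f : ZMod N' → ℂ, ∀ η : ℝ, 0 < η → ∀ (P : Finset ℤ) (a d : ℤ) (L : ℕ),
    P = (Finset.range L).image (fun i : ℕ => a + (i : ℤ) * d) →
    P ⊆ Finset.Icc (1 : ℤ) N → η * N ≤ (P.card : ℝ) →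
    ‖(P.card : ℂ)⁻¹ * ∑ n ∈ P, f (n : ZMod N')‖ ≤
      C * η⁻¹ *
        ‖(1 / (N' : ℂ) ^ 3) * ∑ x : ZMod N', ∑ h₁ : ZMod N', ∑ h₂ : ZMod N',
            f x * (starRingEnd ℂ) (f (x + h₁)) * (starRingEnd ℂ) (f (x + h₂)) *
              f (x + h₁ + h₂)‖ ^ ((1 : ℝ) / 4) := by
  set K := 1 + 2 * ∑' k : ℕ, (k : ℝ) ^ (-(4 / 3) : ℝ)
  refine ⟨8 * K ^ (3 / 4 : ℝ), by positivity, ?_⟩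
  intro N M _ _ hM h4 h8 f η hη P a d L hP hPN hcard
  have : Fact M.Prime := ⟨hM⟩
  have hcardM : (#P : ℝ)⁻¹ * M ≤ 8 * η⁻¹ := by
    rcases (#P).eq_zero_or_pos with h0 | hpos
    · simpa [h0] using hη.le
    have hN : (N : ℝ) ≤ η⁻¹ * #P := (le_inv_mul_iff₀ hη).2 hcard
    have h8' : (M : ℝ) ≤ 8 * N := by exact_mod_cast h8
    rw [inv_mul_le_iff₀ (by exact_mod_cast hpos)]
    linarith
  have hU := norm_sum_progression_le_mul_gowersU2Norm f a d L
  have hU0 := gowersU2Norm_nonneg f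
  change _ ≤ _ * gowersU2Norm f
  rw [norm_mul, norm_inv, Complex.norm_natCast, sum_intCast_progression (by omega) f hP hPN]
  calc (#P : ℝ)⁻¹ * _ ≤ (#P : ℝ)⁻¹ * (K ^ (3 / 4 : ℝ) * M * gowersU2Norm f) := by gcongr
    _ = K ^ (3 / 4 : ℝ) * gowersU2Norm f * ((#P : ℝ)⁻¹ * M) := by ring
    _ ≤ K ^ (3 / 4 : ℝ) * gowersU2Norm f * (8 * η⁻¹) := by gcongr
    _ = 8 * K ^ (3 / 4 : ℝ) * η⁻¹ * gowersU2Norm f := by ring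
end
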